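/- arXiv:1501.03686 — 6 statements merged into one kernel-verified Lean document; each statement's English description precedes it below -/
import Mathlib

section
/- Let n be even and let M_1, ..., M_k be pairwise edge-disjoint perfect matchings in K_n. Then for any two distinct vertices u, v of the graph G obtained from K_n by deleting all edges of the M_i, there exist at least n-1-2k pairwise edge-disjoint paths between u and v in G; in particular G is (n-1-2k)-edge-connected when n-1-2k > 0. -/
/-!
Every non-edge `uw` of `G` lies in some `M_i`, and a matching contains at most one edge at `u`,
so every vertex has at most `k` non-neighbours. Hence all but at most `2k` of the `n - 1`
vertices `w ≠ u` satisfy `u ~ w` and `w ~ v` (or `w = v` with `u ~ v`), and the paths `u w v`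
(resp. the edge `u v`) through these vertices are edge-disjoint. Deleting fewer edges than there
are such paths leaves one of them intact, which gives edge-connectivity.
-/

/-- A graph is `m`-edge-connected: removing any finite set of fewer than `m` edges
leaves it connected. -/
def IsEdgeConnected {V : Type} (G : SimpleGraph V) (m : ℕ) : Prop :=
  ∀ S : Set (Sym2 V), S.Finite → S.ncard < m → (G.deleteEdges S).Connected

open Finset

namespace SimpleGraph

variable {V : Type} {G : SimpleGraph V}

def HasEdgeDisjointPaths (G : SimpleGraph V) (u v : V) (m : ℕ) : Prop :=
  ∃ p : Fin m → G.Walk u v,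
    (∀ i, (p i).IsPath) ∧ ∀ i j, i ≠ j → List.Disjoint (p i).edges (p j).edges

lemma degree_compl_deleteEdges_iUnion_le [Fintype V] [DecidableEq V] {ι : Type} [Fintype ι]
    (M : ι → (⊤ : SimpleGraph V).Subgraph) (hM : ∀ i, (M i).IsMatching)
    [DecidableRel ((⊤ : SimpleGraph V).deleteEdges (⋃ i, (M i).edgeSet)).Adj] (u : V) :
    ((⊤ : SimpleGraph V).deleteEdges (⋃ i, (M i).edgeSet))ᶜ.degree u ≤ Fintype.card ι := by
  rw [← card_neighborFinset_eq_degree, ← card_univ]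
  refine card_le_card_of_forall_subsingleton (fun w i => (M i).Adj u w) (fun w hw => ?_)
    (fun i _ => ?_)
  · simp only [mem_neighborFinset, compl_adj, deleteEdges_adj, top_adj, Set.mem_iUnion,
      Subgraph.mem_edgeSet, not_and, not_not] at hw
    obtain ⟨i, hi⟩ := hw.2 hw.1
    exact ⟨i, mem_univ i, hi⟩
  · rintro w₁ ⟨-, h₁⟩ w₂ ⟨-, h₂⟩
    exact (hM i).eq_of_adj_left h₁ h₂

-- `w = v` stands for the edge `uv`; the diagonal `s(v, v)` in the bound is then harmless.
lemma exists_isPath_edges_subset {u v w : V} (huv : u ≠ v) (huw : G.Adj u w)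
    (hwv : w = v ∨ G.Adj w v) : ∃ q : G.Walk u v, q.IsPath ∧ q.edges ⊆ [s(u, w), s(w, v)] := by
  rcases hwv with rfl | hwv
  · exact ⟨huw.toWalk, by simp [huv], by simp⟩
  · exact ⟨.cons huw hwv.toWalk, by simp [Walk.cons_isPath_iff, huw.ne, huv, hwv.ne], by simp⟩

lemma disjoint_edges_through {u v w₁ w₂ : V} (huv : u ≠ v) (hw₁ : w₁ ≠ u) (hw₂ : w₂ ≠ u)
    (hw : w₁ ≠ w₂) : List.Disjoint [s(u, w₁), s(w₁, v)] [s(u, w₂), s(w₂, v)] := by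
  simp only [List.disjoint_cons_left, List.disjoint_cons_right, List.mem_cons,
    List.not_mem_nil, Sym2.eq_iff, or_false, List.disjoint_nil_left, and_true]
  grind

lemma card_sub_two_mul_le_card_filter [Fintype V] [DecidableEq V] [DecidableRel G.Adj] {d : ℕ}
    (hd : ∀ w, Gᶜ.degree w ≤ d) (u v : V) :
    Fintype.card V - 1 - 2 * d ≤ #{w | G.Adj u w ∧ (w = v ∨ G.Adj w v)} := by
  have hcover : univ.erase u ⊆ ({w | G.Adj u w ∧ (w = v ∨ G.Adj w v)} : Finset V) ∪
      Gᶜ.neighborFinset u ∪ Gᶜ.neighborFinset v := by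
    intro w hw
    have hwu : u ≠ w := (ne_of_mem_erase hw).symm
    simp only [mem_union, mem_filter, mem_univ, true_and, mem_neighborFinset, compl_adj]
    by_cases huw : G.Adj u w
    · by_cases hwv : w = v ∨ G.Adj w v
      · exact Or.inl (Or.inl ⟨huw, hwv⟩)
      · rw [not_or] at hwv
        exact Or.inr ⟨Ne.symm hwv.1, fun h => hwv.2 h.symm⟩
    · exact Or.inl (Or.inr ⟨hwu, huw⟩)
  have := (card_le_card hcover).trans <| (card_union_le _ _).trans <|
    add_le_add (card_union_le _ _) le_rfl
  rw [card_erase_of_mem (mem_univ u), card_univ, card_neighborFinset_eq_degree,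
    card_neighborFinset_eq_degree] at this
  have := hd u
  have := hd v
  omega

theorem hasEdgeDisjointPaths_of_degree_compl_le [Fintype V] [DecidableEq V] [DecidableRel G.Adj]
    {d : ℕ} (hd : ∀ w, Gᶜ.degree w ≤ d) {u v : V} (huv : u ≠ v) :
    G.HasEdgeDisjointPaths u v (Fintype.card V - 1 - 2 * d) := by
  obtain ⟨f⟩ : Nonempty (Fin (Fintype.card V - 1 - 2 * d) ↪
      ({w | G.Adj u w ∧ (w = v ∨ G.Adj w v)} : Finset V)) :=
    Function.Embedding.nonempty_of_card_le <| by
      rw [Fintype.card_fin, Fintype.card_coe]; exact card_sub_two_mul_le_card_filter hd u v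
  have hf i : G.Adj u (f i) ∧ ((f i : V) = v ∨ G.Adj (f i) v) := (mem_filter.1 (f i).2).2
  choose p hp hpe using fun i => exists_isPath_edges_subset huv (hf i).1 (hf i).2
  refine ⟨p, hp, fun i j hij => ?_⟩
  have hfij : (f i : V) ≠ f j := fun h => hij (f.injective (Subtype.ext h))
  exact List.disjoint_of_subset_left (hpe i) <| List.disjoint_of_subset_right (hpe j) <|
    disjoint_edges_through huv (hf i).1.ne' (hf j).1.ne' hfij

lemma HasEdgeDisjointPaths.isEdgeReachable {u v : V} {m : ℕ}
    (h : G.HasEdgeDisjointPaths u v m) : G.IsEdgeReachable m u v := by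
  intro s hsm
  obtain ⟨p, -, hdisj⟩ := h
  by_contra hnr
  have hmeet : ∀ i, ∃ e ∈ (p i).edges, e ∈ s := fun i => by
    by_contra! hi
    exact hnr ⟨(p i).toDeleteEdges s hi⟩
  choose e he hes using hmeet
  have he_inj : Function.Injective e := fun i j hij => by
    by_contra hne
    exact hdisj i j hne (he i) (hij ▸ he j)
  have := Set.encard_le_encard_of_injOn (s := Set.univ) (fun i _ => hes i) he_inj.injOn
  simp only [Set.encard_univ, ENat.card_eq_coe_fintype_card, Fintype.card_fin] at this
  exact this.not_gt hsm

lemma IsEdgeConnected.connected_deleteEdges [Nonempty V] {m : ℕ} (h : G.IsEdgeConnected m)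
    {s : Set (Sym2 V)} (hs : s.Finite) (hsm : s.ncard < m) : (G.deleteEdges s).Connected :=
  ⟨fun u v => h u v (by rw [← hs.cast_ncard_eq]; exact_mod_cast hsm)⟩

end SimpleGraph

theorem deleteMatchings_edge_disjoint_paths_general (n k : ℕ)
    (M : Fin k → (⊤ : SimpleGraph (Fin n)).Subgraph)
    (hpm : ∀ i, (M i).IsPerfectMatching) :
    (∀ u v : Fin n, u ≠ v →
      ∃ p : Fin (n - 1 - 2 * k) →
          ((⊤ : SimpleGraph (Fin n)).deleteEdges (⋃ i, (M i).edgeSet)).Walk u v,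
        (∀ i, (p i).IsPath) ∧
        ∀ i j, i ≠ j → List.Disjoint (p i).edges (p j).edges) ∧
    (0 < n - 1 - 2 * k →
      IsEdgeConnected ((⊤ : SimpleGraph (Fin n)).deleteEdges (⋃ i, (M i).edgeSet))
        (n - 1 - 2 * k)) := by
  classical
  have hpaths : ∀ u v : Fin n, u ≠ v →
      ((⊤ : SimpleGraph (Fin n)).deleteEdges (⋃ i, (M i).edgeSet)).HasEdgeDisjointPaths u v
        (n - 1 - 2 * k) := fun u v huv => by
    simpa using SimpleGraph.hasEdgeDisjointPaths_of_degree_compl_le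
      (SimpleGraph.degree_compl_deleteEdges_iUnion_le M fun i => (hpm i).1) huv
  refine ⟨hpaths, fun hpos s hs hsm => ?_⟩
  have : Nonempty (Fin n) := ⟨⟨0, by omega⟩⟩
  refine SimpleGraph.IsEdgeConnected.connected_deleteEdges (fun u v => ?_) hs hsm
  rcases eq_or_ne u v with rfl | huv
  · rfl
  · exact (hpaths u v huv).isEdgeReachable

/-- Let `n` be even and `M_1, …, M_k` pairwise edge-disjoint perfect matchings
in `K_n`, and let `G` be `K_n` minus the edges of all the `M_i`. Then any two distinct
vertices of `G` are joined by at least `n - 1 - 2k` pairwise edge-disjoint paths in `G`;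
in particular `G` is `(n - 1 - 2k)`-edge-connected when `n - 1 - 2k > 0`. -/
theorem deleteMatchings_edge_disjoint_paths (n k : ℕ) (hn : Even n)
    (M : Fin k → (⊤ : SimpleGraph (Fin n)).Subgraph)
    (hpm : ∀ i, (M i).IsPerfectMatching)
    (hdisj : ∀ i j, i ≠ j → Disjoint (M i).edgeSet (M j).edgeSet) :
    (∀ u v : Fin n, u ≠ v →
      ∃ p : Fin (n - 1 - 2 * k) →
          ((⊤ : SimpleGraph (Fin n)).deleteEdges (⋃ i, (M i).edgeSet)).Walk u v,
        (∀ i, (p i).IsPath) ∧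
        ∀ i j, i ≠ j → List.Disjoint (p i).edges (p j).edges) ∧
    (0 < n - 1 - 2 * k →
      IsEdgeConnected ((⊤ : SimpleGraph (Fin n)).deleteEdges (⋃ i, (M i).edgeSet))
        (n - 1 - 2 * k)) :=
  deleteMatchings_edge_disjoint_paths_general n k M hpm
end

section
/- If n ≡ 2 (mod 4), then the matching persistency of K_n is at most n/2: there exist n/2 pairwise edge-disjoint perfect matchings of K_n whose removal leaves a graph with no perfect matching. -/
/-!
Split the `n = 2m` vertices into halves `A` and `B`, each identified with a group `α` of odd
order `m` (here `Fin m`). For each `k : α` the edges `a ~ a + k` from `A` to `B` form a perfect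
matching, and these `m` matchings partition the edges of the complete bipartite graph between
`A` and `B`. Deleting them leaves no edge leaving `A`, so a perfect matching of what remains
would restrict to a perfect matching of `A`, which is impossible since `|A| = m` is odd.
-/

/-- The matching persistency of a graph `G`: the size of the smallest set of pairwise
edge-disjoint perfect matchings whose removal from `G` leaves a graph with no
perfect matching. -/
noncomputable def matchingPersistency {V : Type} (G : SimpleGraph V) : ℕ :=
  sInf {k : ℕ | ∃ 𝓜 : Finset G.Subgraph, 𝓜.card = k ∧
    (∀ M ∈ 𝓜, M.IsPerfectMatching) ∧
    ((𝓜 : Set G.Subgraph).Pairwise fun M N => Disjoint M.edgeSet N.edgeSet) ∧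
    ¬ ∃ M' : (G.deleteEdges (⋃ M ∈ 𝓜, SimpleGraph.Subgraph.edgeSet M)).Subgraph,
        M'.IsPerfectMatching}

namespace SimpleGraph

variable {V : Type*} {G : SimpleGraph V}

lemma Subgraph.IsPerfectMatching.induce_isMatching_of_adj_mem {M : G.Subgraph}
    (hM : M.IsPerfectMatching) {s : Set V} (hs : ∀ v ∈ s, ∀ w, G.Adj v w → w ∈ s) :
    (M.induce s).IsMatching := by
  intro v hv
  obtain ⟨w, hvw, huniq⟩ := hM.1 (hM.2 v)
  exact ⟨w, ⟨hv, hs v hv w (M.adj_sub hvw), hvw⟩, fun y hy => huniq y hy.2.2⟩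

lemma Subgraph.IsPerfectMatching.even_ncard_of_adj_mem {M : G.Subgraph}
    (hM : M.IsPerfectMatching) {s : Set V} (hfin : s.Finite)
    (hs : ∀ v ∈ s, ∀ w, G.Adj v w → w ∈ s) : Even s.ncard := by
  have : Fintype s := hfin.fintype
  rw [Set.ncard_eq_toFinset_card']
  exact @Subgraph.IsMatching.even_card _ _ (M.induce s) this (hM.induce_isMatching_of_adj_mem hs)

variable {α : Type*} [AddGroup α] (e : V ≃ α ⊕ α)

/-- The `k`-th factor of the one-factorisation of `K_{α,α}` by translations. -/
def shiftAdj (k : α) : α ⊕ α → α ⊕ α → Prop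
  | .inl a, .inr b => b = a + k
  | .inr b, .inl a => b = a + k
  | _, _ => False

lemma shiftAdj_comm (k : α) (x y : α ⊕ α) : shiftAdj k x y ↔ shiftAdj k y x := by
  rcases x with a | b <;> rcases y with c | d <;> rfl

lemma not_shiftAdj_self (k : α) (x : α ⊕ α) : ¬ shiftAdj k x x := by
  rcases x with a | b <;> exact id

lemma existsUnique_shiftAdj (k : α) (x : α ⊕ α) : ∃! y, shiftAdj k x y := by
  rcases x with a | b
  · refine ⟨.inr (a + k), rfl, ?_⟩
    rintro (c | d) h
    · exact h.elim
    · exact congrArg _ h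
  · refine ⟨.inl (b - k), sub_add_cancel b k |>.symm, ?_⟩
    rintro (c | d) h
    · exact congrArg _ (eq_sub_of_add_eq h.symm)
    · exact h.elim

def shiftMatching (k : α) : (⊤ : SimpleGraph V).Subgraph where
  verts := Set.univ
  Adj v w := shiftAdj k (e v) (e w)
  adj_sub {v _} h := by
    rintro rfl
    exact not_shiftAdj_self k (e v) h
  edge_vert _ := trivial
  symm := ⟨fun _ _ h => (shiftAdj_comm _ _ _).1 h⟩

@[simp]
lemma shiftMatching_adj {k : α} {v w : V} :
    (shiftMatching e k).Adj v w ↔ shiftAdj k (e v) (e w) := .rfl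

lemma eq_of_shiftAdj {k l : α} {x y : α ⊕ α} (hk : shiftAdj k x y) (hl : shiftAdj l x y) :
    k = l := by
  rcases x with a | b <;> rcases y with c | d
  all_goals first | exact hk.elim | exact add_left_cancel (hk.symm.trans hl)

lemma shiftAdj_neg_add (a b : α) : shiftAdj (-a + b) (.inl a) (.inr b) :=
  (add_neg_cancel_left a b).symm

lemma isPerfectMatching_shiftMatching (k : α) : (shiftMatching e k).IsPerfectMatching :=
  Subgraph.isPerfectMatching_iff.2 fun v =>
    e.existsUnique_congr_left.2 (by simpa using existsUnique_shiftAdj k (e v))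

lemma disjoint_edgeSet_shiftMatching {k l : α} (hkl : k ≠ l) :
    Disjoint (shiftMatching e k).edgeSet (shiftMatching e l).edgeSet := by
  refine Set.disjoint_left.2 fun x hk hl => hkl ?_
  induction x using Sym2.ind with
  | _ v w => exact eq_of_shiftAdj hk hl

lemma shiftMatching_injective : Function.Injective (shiftMatching (V := V) e) := by
  intro k l h
  have hk : (shiftMatching e k).Adj (e.symm (.inl k)) (e.symm (.inr (k + k))) := by
    simp [shiftAdj]
  rw [h] at hk
  exact eq_of_shiftAdj (x := .inl k) (y := .inr (k + k)) rfl (by simpa using hk)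

variable [Fintype α]

def shiftMatchings : Finset (⊤ : SimpleGraph V).Subgraph :=
  Finset.univ.map ⟨shiftMatching e, shiftMatching_injective e⟩

lemma card_shiftMatchings : (shiftMatchings e).card = Fintype.card α := by
  simp [shiftMatchings]

lemma mem_shiftMatchings {M : (⊤ : SimpleGraph V).Subgraph} :
    M ∈ shiftMatchings e ↔ ∃ k, shiftMatching e k = M := by
  simp [shiftMatchings]

lemma isPerfectMatching_of_mem_shiftMatchings {M : (⊤ : SimpleGraph V).Subgraph}
    (hM : M ∈ shiftMatchings e) : M.IsPerfectMatching := by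
  obtain ⟨k, rfl⟩ := (mem_shiftMatchings e).1 hM
  exact isPerfectMatching_shiftMatching e k

lemma pairwise_disjoint_shiftMatchings :
    (shiftMatchings e : Set (⊤ : SimpleGraph V).Subgraph).Pairwise
      fun M N => Disjoint M.edgeSet N.edgeSet := by
  rintro _ hM _ hN hMN
  obtain ⟨k, rfl⟩ := (mem_shiftMatchings e).1 hM
  obtain ⟨l, rfl⟩ := (mem_shiftMatchings e).1 hN
  exact disjoint_edgeSet_shiftMatching e fun hkl => hMN (hkl ▸ rfl)

lemma mem_range_of_deleteEdges_shiftMatchings_adj {a : α} {w : V}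
    (h : ((⊤ : SimpleGraph V).deleteEdges (⋃ M ∈ shiftMatchings e, M.edgeSet)).Adj
      (e.symm (.inl a)) w) :
    w ∈ Set.range (e.symm ∘ Sum.inl) := by
  by_contra hw
  obtain ⟨b, hb⟩ : ∃ b, e w = .inr b := by
    rcases hew : e w with c | b
    · exact (hw ⟨c, by simp [← hew]⟩).elim
    · exact ⟨b, rfl⟩
  refine (deleteEdges_adj.1 h).2 (Set.mem_biUnion
    ((mem_shiftMatchings e).2 ⟨-a + b, rfl⟩) ?_)
  simpa [hb] using shiftAdj_neg_add a b

theorem not_exists_isPerfectMatching_deleteEdges_shiftMatchings (hα : Odd (Fintype.card α)) :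
    ¬ ∃ M : ((⊤ : SimpleGraph V).deleteEdges (⋃ M ∈ shiftMatchings e, M.edgeSet)).Subgraph,
      M.IsPerfectMatching := by
  rintro ⟨M, hM⟩
  have hinj : Function.Injective (e.symm ∘ Sum.inl : α → V) :=
    e.symm.injective.comp Sum.inl_injective
  refine Nat.not_even_iff_odd.2 hα ?_
  rw [← Nat.card_eq_fintype_card, ← Set.ncard_range_of_injective hinj]
  refine hM.even_ncard_of_adj_mem (Set.finite_range _) ?_
  rintro _ ⟨a, rfl⟩ w h
  exact mem_range_of_deleteEdges_shiftMatchings_adj e h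

theorem exists_disjoint_perfectMatchings_deleteEdges_no_perfectMatching (e : V ≃ α ⊕ α)
    (hα : Odd (Fintype.card α)) :
    ∃ 𝓜 : Finset (⊤ : SimpleGraph V).Subgraph, 𝓜.card = Fintype.card α ∧
      (∀ M ∈ 𝓜, M.IsPerfectMatching) ∧
      ((𝓜 : Set (⊤ : SimpleGraph V).Subgraph).Pairwise
        fun M N => Disjoint M.edgeSet N.edgeSet) ∧
      ¬ ∃ M' : ((⊤ : SimpleGraph V).deleteEdges (⋃ M ∈ 𝓜, M.edgeSet)).Subgraph,
          M'.IsPerfectMatching :=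
  ⟨shiftMatchings e, card_shiftMatchings e, fun _ => isPerfectMatching_of_mem_shiftMatchings e,
    pairwise_disjoint_shiftMatchings e,
    not_exists_isPerfectMatching_deleteEdges_shiftMatchings e hα⟩

end SimpleGraph

/-- If `n ≡ 2 (mod 4)`, then the matching persistency of `K_n` is at most `n/2`:
there exist `n/2` pairwise edge-disjoint perfect matchings of `K_n` whose removal leaves a
graph with no perfect matching. -/
theorem mp_complete_le_half (n : ℕ) (hn : n % 4 = 2) :
    (∃ 𝓜 : Finset (⊤ : SimpleGraph (Fin n)).Subgraph, 𝓜.card = n / 2 ∧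
      (∀ M ∈ 𝓜, M.IsPerfectMatching) ∧
      ((𝓜 : Set (⊤ : SimpleGraph (Fin n)).Subgraph).Pairwise
        fun M N => Disjoint M.edgeSet N.edgeSet) ∧
      ¬ ∃ M' : ((⊤ : SimpleGraph (Fin n)).deleteEdges
            (⋃ M ∈ 𝓜, SimpleGraph.Subgraph.edgeSet M)).Subgraph,
          M'.IsPerfectMatching) ∧
    matchingPersistency (⊤ : SimpleGraph (Fin n)) ≤ n / 2 := by
  have : NeZero (n / 2) := ⟨by omega⟩
  let e : Fin n ≃ Fin (n / 2) ⊕ Fin (n / 2) := (finCongr (by omega)).trans finSumFinEquiv.symm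
  have hodd : Odd (Fintype.card (Fin (n / 2))) := by
    rw [Fintype.card_fin, Nat.odd_iff]
    omega
  obtain ⟨𝓜, hcard, h𝓜⟩ :=
    SimpleGraph.exists_disjoint_perfectMatchings_deleteEdges_no_perfectMatching e hodd
  rw [Fintype.card_fin] at hcard
  exact ⟨⟨𝓜, hcard, h𝓜⟩, Nat.sInf_le ⟨𝓜, hcard, h𝓜⟩⟩
end

section
/- If n ≡ 2 (mod 4), then mp(K_n) = n/2. -/
/-!
Lower bound: removing `k < n / 2` perfect matchings from `K_n` leaves a graph of minimum degree
`n - 1 - k ≥ n / 2`, and such a graph has a perfect matching. Indeed a maximum matching missing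
two vertices `u`, `v` could be enlarged: either an unmatched vertex has an unmatched neighbour,
or all neighbours of `u` and `v` are matched and, since `deg u + deg v ≥ n`, some matched edge
`xy` has `u ~ x` and `v ~ y`, so `xy` can be exchanged for `ux` and `vy`.

Upper bound: write the vertex set as `ℤ/m × {0, 1}` with `m = n / 2` odd. For `g ∈ ℤ/m` join
`(i, 0)` to `(g - i, 1)`. These `m` perfect matchings partition the edges between the two sides,
so removing them leaves two disjoint copies of `K_m`, which has no perfect matching as `m` is odd.
-/

open Finset

namespace SimpleGraph

variable {V : Type*} {G : SimpleGraph V}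

namespace Subgraph

variable {M N : G.Subgraph}

lemma IsMatching.sup_of_disjoint_verts (hM : M.IsMatching) (hN : N.IsMatching)
    (h : Disjoint M.verts N.verts) : (M ⊔ N).IsMatching :=
  hM.sup hN (by rwa [hM.support_eq_verts, hN.support_eq_verts])

lemma IsMatching.deleteVerts_pair (hM : M.IsMatching) {x y : V} (hxy : M.Adj x y) :
    (M.deleteVerts {x, y}).IsMatching := by
  rintro v ⟨hv, hvxy⟩
  obtain ⟨w, hvw, hw⟩ := hM hv
  have hwxy : w ∉ ({x, y} : Set V) := by
    rintro (rfl | rfl)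
    · exact hvxy (.inr (hM.eq_of_adj_right hvw hxy.symm))
    · exact hvxy (.inl (hM.eq_of_adj_right hvw hxy))
  exact ⟨w, deleteVerts_adj.2 ⟨hv, hvxy, M.edge_vert hvw.symm, hwxy, hvw⟩,
    fun z hz => hw z (deleteVerts_adj.1 hz).2.2.2.2⟩

lemma IsMatching.exists_adj_adj_of_ncard_lt [Fintype V] [DecidableRel G.Adj] (hM : M.IsMatching)
    {u v : V} (hu : ∀ w, G.Adj u w → w ∈ M.verts) (hv : ∀ w, G.Adj v w → w ∈ M.verts)
    (hcard : M.verts.ncard < G.degree u + G.degree v) :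
    ∃ x y, M.Adj x y ∧ G.Adj u x ∧ G.Adj v y := by
  classical
  set P := M.verts.toFinset.filter fun x => ∃ y, M.Adj x y ∧ G.Adj v y
  have hP : G.degree v ≤ P.card := by
    refine card_le_card_of_forall_subsingleton (fun y x => M.Adj y x) (fun y hy => ?_)
      fun x _ y₁ hy₁ y₂ hy₂ => hM.eq_of_adj_right hy₁.2 hy₂.2
    have hvy := (mem_neighborFinset _ _ _).1 hy
    obtain ⟨x, hyx, -⟩ := hM (hv y hvy)
    exact ⟨x, mem_filter.2 ⟨Set.mem_toFinset.2 (M.edge_vert hyx.symm), y, hyx.symm, hvy⟩, hyx⟩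
  have hNu : G.neighborFinset u ⊆ M.verts.toFinset := fun w hw =>
    Set.mem_toFinset.2 (hu w ((mem_neighborFinset _ _ _).1 hw))
  obtain ⟨x, hx⟩ := inter_nonempty_of_card_lt_card_add_card (u := P) hNu (filter_subset _ _)
    (by rw [← Set.ncard_eq_toFinset_card', card_neighborFinset_eq_degree]; omega)
  obtain ⟨hxu, hxP⟩ := mem_inter.1 hx
  obtain ⟨-, y, hxy, hvy⟩ := mem_filter.1 hxP
  exact ⟨x, y, hxy, (mem_neighborFinset _ _ _).1 hxu, hvy⟩

lemma IsMatching.exists_ncard_verts_lt [Fintype V] [DecidableRel G.Adj]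
    (hV : Even (Fintype.card V)) (hdeg : ∀ v, Fintype.card V ≤ 2 * G.degree v)
    (hM : M.IsMatching) (hspan : ¬M.IsSpanning) :
    ∃ M' : G.Subgraph, M'.IsMatching ∧ M.verts.ncard < M'.verts.ncard := by
  classical
  have hlt : M.verts.ncard < Fintype.card V := by
    rw [← Nat.card_eq_fintype_card]
    exact Set.ncard_lt_card fun h => hspan fun v => h ▸ Set.mem_univ v
  have heven : Even M.verts.ncard := by
    rw [Set.ncard_eq_toFinset_card']
    exact hM.even_card
  obtain ⟨u, v, hu, hv, huv⟩ : ∃ u v, u ∉ M.verts ∧ v ∉ M.verts ∧ u ≠ v := by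
    have : 1 < M.vertsᶜ.ncard := by
      rw [Set.ncard_compl, Nat.card_eq_fintype_card]
      obtain ⟨a, ha⟩ := hV
      obtain ⟨b, hb⟩ := heven
      omega
    simpa using (Set.one_lt_ncard_iff (Set.toFinite _)).1 this
  by_cases hfree : ∃ a b, a ∉ M.verts ∧ b ∉ M.verts ∧ G.Adj a b
  · obtain ⟨a, b, ha, hb, hab⟩ := hfree
    refine ⟨M ⊔ G.subgraphOfAdj hab, hM.sup_of_disjoint_verts (.subgraphOfAdj hab) ?_,
      Set.ncard_lt_ncard ((Set.ssubset_iff_of_subset Set.subset_union_left).2 ⟨a, ?_, ha⟩)⟩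
    · simp [ha, hb]
    · simp
  · push Not at hfree
    obtain ⟨x, y, hxy, hux, hvy⟩ := hM.exists_adj_adj_of_ncard_lt
      (fun w huw => by_contra fun hw => hfree u w hu hw huw)
      (fun w hvw => by_contra fun hw => hfree v w hv hw hvw)
      (by have := hdeg u; have := hdeg v; omega)
    have hx := M.edge_vert hxy
    have hy := M.edge_vert hxy.symm
    refine ⟨M.deleteVerts {x, y} ⊔ (G.subgraphOfAdj hux ⊔ G.subgraphOfAdj hvy),
      (hM.deleteVerts_pair hxy).sup_of_disjoint_verts
        ((IsMatching.subgraphOfAdj hux).sup_of_disjoint_verts (.subgraphOfAdj hvy) ?_) ?_,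
      Set.ncard_lt_ncard ((Set.ssubset_iff_of_subset ?_).2 ⟨u, ?_, hu⟩)⟩
    · have := hxy.ne
      simp only [subgraphOfAdj_verts, Set.disjoint_insert_left, Set.disjoint_insert_right,
        Set.disjoint_singleton, Set.mem_insert_iff, Set.mem_singleton_iff]
      grind
    · simp only [verts_sup, deleteVerts_verts, subgraphOfAdj_verts, Set.disjoint_left,
        Set.mem_sdiff, Set.mem_union, Set.mem_insert_iff, Set.mem_singleton_iff]
      grind
    · intro w hw
      simp only [verts_sup, deleteVerts_verts, subgraphOfAdj_verts, Set.mem_sdiff, Set.mem_union,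
        Set.mem_insert_iff, Set.mem_singleton_iff]
      tauto
    · simp

theorem IsPerfectMatching.even_card_of_forall_adj_mem
    (hM : M.IsPerfectMatching) {s : Finset V} (hs : ∀ a b, G.Adj a b → a ∈ s → b ∈ s) :
    Even s.card := by
  have hMs : (M.induce s).IsMatching := by
    intro a ha
    obtain ⟨b, hab, hb⟩ := hM.1 (hM.2 a)
    exact ⟨b, ⟨ha, hs a b (M.adj_sub hab) ha, hab⟩, fun c hc => hb c hc.2.2⟩
  have : Fintype (M.induce s).verts := inferInstanceAs (Fintype (s : Set V))
  simpa using hMs.even_card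

end Subgraph

theorem exists_isPerfectMatching_of_card_le_two_mul_degree [Fintype V] [DecidableRel G.Adj]
    (hV : Even (Fintype.card V)) (hdeg : ∀ v, Fintype.card V ≤ 2 * G.degree v) :
    ∃ M : G.Subgraph, M.IsPerfectMatching := by
  obtain ⟨M, hM, hmax⟩ := Set.exists_max_image {M : G.Subgraph | M.IsMatching}
    (fun M => M.verts.ncard) (Set.toFinite _) ⟨⊥, fun _ hv => hv.elim⟩
  refine ⟨M, hM, by_contra fun hspan => ?_⟩
  obtain ⟨M', hM', hlt⟩ := hM.exists_ncard_verts_lt hV hdeg hspan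
  exact (hmax M' hM').not_gt hlt

theorem degree_le_degree_add_card_of_forall_adj {H : SimpleGraph V} [Fintype V]
    [DecidableRel G.Adj] [DecidableRel H.Adj] (𝓜 : Finset G.Subgraph)
    (h𝓜 : ∀ M ∈ 𝓜, M.IsMatching) {v : V}
    (hcover : ∀ w, G.Adj v w → ¬H.Adj v w → ∃ M ∈ 𝓜, M.Adj v w) :
    G.degree v ≤ H.degree v + 𝓜.card := by
  have hlost : ((G.neighborFinset v).filter fun w => ¬H.Adj v w).card ≤ 𝓜.card :=
    card_le_card_of_forall_subsingleton (fun w M => M.Adj v w)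
      (fun w hw => hcover w ((mem_neighborFinset _ _ _).1 (mem_filter.1 hw).1) (mem_filter.1 hw).2)
      fun M hM w₁ hw₁ w₂ hw₂ => (h𝓜 M hM).eq_of_adj_left hw₁.2 hw₂.2
  have hkept : (G.neighborFinset v).filter (fun w => H.Adj v w) ⊆ H.neighborFinset v :=
    fun w hw => (mem_neighborFinset _ _ _).2 (mem_filter.1 hw).2
  calc G.degree v
      = ((G.neighborFinset v).filter fun w => H.Adj v w).card
        + ((G.neighborFinset v).filter fun w => ¬H.Adj v w).card := by
          rw [card_filter_add_card_filter_not, card_neighborFinset_eq_degree]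
    _ ≤ H.degree v + 𝓜.card := add_le_add (card_le_card hkept) hlost

theorem exists_isPerfectMatching_deleteEdges_top [Fintype V] (hV : Even (Fintype.card V))
    (𝓜 : Finset (⊤ : SimpleGraph V).Subgraph) (h𝓜 : ∀ M ∈ 𝓜, M.IsMatching)
    (hcard : 2 * 𝓜.card < Fintype.card V) :
    ∃ M' : ((⊤ : SimpleGraph V).deleteEdges (⋃ M ∈ 𝓜, M.edgeSet)).Subgraph,
      M'.IsPerfectMatching := by
  classical
  refine exists_isPerfectMatching_of_card_le_two_mul_degree hV fun v => ?_
  have := degree_le_degree_add_card_of_forall_adj 𝓜 h𝓜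
    (H := (⊤ : SimpleGraph V).deleteEdges (⋃ M ∈ 𝓜, M.edgeSet))
    (v := v) fun w hvw hw => by simpa [hvw.ne] using hw
  rw [complete_graph_degree] at this
  obtain ⟨a, ha⟩ := hV
  omega

section CrossMatching

variable {Γ : Type*} [AddCommGroup Γ]

def crossMatching (e : V ≃ Γ × Bool) (g : Γ) : (⊤ : SimpleGraph V).Subgraph where
  verts := Set.univ
  Adj a b := (e a).2 ≠ (e b).2 ∧ (e a).1 + (e b).1 = g
  adj_sub h := (top_adj _ _).2 fun hab => h.1 (hab ▸ rfl)
  edge_vert _ := Set.mem_univ _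
  symm := ⟨fun _ _ h => ⟨h.1.symm, add_comm (e _).1 _ ▸ h.2⟩⟩

variable (e : V ≃ Γ × Bool)

@[simp]
theorem crossMatching_adj {g : Γ} {a b : V} :
    (crossMatching e g).Adj a b ↔ (e a).2 ≠ (e b).2 ∧ (e a).1 + (e b).1 = g :=
  Iff.rfl

theorem crossMatching_isPerfectMatching (g : Γ) : (crossMatching e g).IsPerfectMatching := by
  refine Subgraph.isPerfectMatching_iff.2 fun a => ⟨e.symm (g - (e a).1, !(e a).2), ?_, ?_⟩
  · simp
  · intro b hb
    obtain ⟨hside, hsum⟩ := (crossMatching_adj e).1 hb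
    rw [e.eq_symm_apply]
    ext
    · exact eq_sub_of_add_eq' hsum
    · simpa [Bool.eq_not] using hside.symm

theorem disjoint_edgeSet_crossMatching {g h : Γ} (hgh : g ≠ h) :
    Disjoint (crossMatching e g).edgeSet (crossMatching e h).edgeSet := by
  refine Set.disjoint_left.2 fun x hg hh => ?_
  induction x using Sym2.ind with
  | h a b => exact hgh (((crossMatching_adj e).1 hg).2.symm.trans ((crossMatching_adj e).1 hh).2)

theorem crossMatching_injective : Function.Injective (crossMatching e) := by
  intro g h hgh
  have hadj : (crossMatching e g).Adj (e.symm (0, false)) (e.symm (g, true)) := by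
    simp
  rw [hgh] at hadj
  simpa using ((crossMatching_adj e).1 hadj).2

variable [Fintype Γ]

def crossMatchings : Finset (⊤ : SimpleGraph V).Subgraph :=
  univ.map ⟨crossMatching e, crossMatching_injective e⟩

theorem card_crossMatchings : (crossMatchings e).card = Fintype.card Γ := by
  simp [crossMatchings]

theorem isPerfectMatching_of_mem_crossMatchings {M : (⊤ : SimpleGraph V).Subgraph}
    (hM : M ∈ crossMatchings e) : M.IsPerfectMatching := by
  obtain ⟨g, -, rfl⟩ := mem_map.1 hM
  exact crossMatching_isPerfectMatching e g

theorem pairwise_disjoint_edgeSet_crossMatchings :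
    (crossMatchings e : Set (⊤ : SimpleGraph V).Subgraph).Pairwise
      fun M N => Disjoint M.edgeSet N.edgeSet := by
  rintro _ hM _ hN hMN
  obtain ⟨g, -, rfl⟩ := mem_map.1 hM
  obtain ⟨h, -, rfl⟩ := mem_map.1 hN
  exact disjoint_edgeSet_crossMatching e fun hgh => hMN (congrArg _ hgh)

theorem snd_eq_of_adj_deleteEdges_crossMatchings {a b : V}
    (hab : ((⊤ : SimpleGraph V).deleteEdges (⋃ M ∈ crossMatchings e, M.edgeSet)).Adj a b) :
    (e a).2 = (e b).2 := by
  by_contra hne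
  refine (deleteEdges_adj.1 hab).2 (Set.mem_biUnion (x := crossMatching e ((e a).1 + (e b).1))
    (by simp [crossMatchings]) ?_)
  exact (Subgraph.mem_edgeSet).2 ((crossMatching_adj e).2 ⟨hne, rfl⟩)

theorem not_exists_isPerfectMatching_deleteEdges_crossMatchings (hΓ : Odd (Fintype.card Γ)) :
    ¬∃ M' : ((⊤ : SimpleGraph V).deleteEdges (⋃ M ∈ crossMatchings e, M.edgeSet)).Subgraph,
      M'.IsPerfectMatching := by
  rintro ⟨M', hM'⟩
  have heven := hM'.even_card_of_forall_adj_mem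
    (s := univ.map ⟨fun g => e.symm (g, false), e.symm.injective.comp (Prod.mk_left_injective _)⟩)
    fun a b hab ha => by
      obtain ⟨g, -, rfl⟩ := mem_map.1 ha
      have hb := snd_eq_of_adj_deleteEdges_crossMatchings e hab
      simp only [Function.Embedding.coeFn_mk, Equiv.apply_symm_apply] at hb
      exact mem_map.2 ⟨(e b).1, mem_univ _, e.symm_apply_eq.2 (Prod.ext rfl hb)⟩
  rw [card_map, card_univ] at heven
  exact Nat.not_even_iff_odd.2 hΓ heven

end CrossMatching

end SimpleGraph

open SimpleGraph

theorem matchingPersistency_eq_card {V : Type} {G : SimpleGraph V} (𝓜₀ : Finset G.Subgraph)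
    (hpm₀ : ∀ M ∈ 𝓜₀, M.IsPerfectMatching)
    (hdisj₀ : (𝓜₀ : Set G.Subgraph).Pairwise fun M N => Disjoint M.edgeSet N.edgeSet)
    (hblock₀ : ¬∃ M' : (G.deleteEdges (⋃ M ∈ 𝓜₀, M.edgeSet)).Subgraph, M'.IsPerfectMatching)
    (hmin : ∀ 𝓜 : Finset G.Subgraph, (∀ M ∈ 𝓜, M.IsPerfectMatching) → 𝓜.card < 𝓜₀.card →
      ∃ M' : (G.deleteEdges (⋃ M ∈ 𝓜, M.edgeSet)).Subgraph, M'.IsPerfectMatching) :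
    matchingPersistency G = 𝓜₀.card :=
  le_antisymm (Nat.sInf_le ⟨𝓜₀, rfl, hpm₀, hdisj₀, hblock₀⟩)
    (le_csInf ⟨_, 𝓜₀, rfl, hpm₀, hdisj₀, hblock₀⟩ fun _ ⟨𝓜, hk, hpm, _, hblock⟩ =>
      not_lt.1 fun hlt => hblock (hmin 𝓜 hpm (hk ▸ hlt)))

/-- If `n ≡ 2 (mod 4)`, then the matching persistency of `K_n` equals `n/2`. -/
theorem mp_complete_eq_half (n : ℕ) (hn : n % 4 = 2) :
    matchingPersistency (⊤ : SimpleGraph (Fin n)) = n / 2 := by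
  have : NeZero (n / 2) := ⟨by omega⟩
  obtain ⟨e⟩ : Nonempty (Fin n ≃ ZMod (n / 2) × Bool) :=
    Fintype.card_eq.1 (by simp only [Fintype.card_fin, Fintype.card_prod, ZMod.card,
      Fintype.card_bool]; omega)
  have hcard : (crossMatchings e).card = n / 2 := by rw [card_crossMatchings, ZMod.card]
  rw [← hcard]
  refine matchingPersistency_eq_card _ (fun _ => isPerfectMatching_of_mem_crossMatchings e)
    (pairwise_disjoint_edgeSet_crossMatchings e)
    (not_exists_isPerfectMatching_deleteEdges_crossMatchings e
      (by rw [ZMod.card]; exact Nat.odd_iff.2 (by omega)))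
    fun 𝓜 hpm hlt => exists_isPerfectMatching_deleteEdges_top
      ⟨n / 2, by rw [Fintype.card_fin]; omega⟩ 𝓜 (fun M hM => (hpm M hM).1)
      (by rw [Fintype.card_fin]; omega)
end

section
/- Let P be a set of n points in convex position in the plane, n even, n ≥ 4, with no three collinear. Then every plane (non-crossing) perfect matching on P contains at least two edges of the convex hull of P, i.e., at least two edges joining consecutive points in the cyclic order of P. -/
noncomputable section

/-- Points of the Euclidean plane. -/
abbrev Pt : Type := EuclideanSpace ℝ (Fin 2)

/-- Two straight segments *cross* if they share a point interior to both. -/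
def SegCross (a b c d : Pt) : Prop :=
  (openSegment ℝ a b ∩ openSegment ℝ c d).Nonempty

/-- Two edges (unordered pairs of points) cross. -/
def EdgesCross (e f : Sym2 Pt) : Prop :=
  ∃ a b c d : Pt, e = s(a, b) ∧ f = s(c, d) ∧ SegCross a b c d

/-- `M` is a perfect matching on the point set `P`: a set of non-degenerate edges with
endpoints in `P` such that every point of `P` lies in exactly one edge. -/
def IsPerfMatch (P : Set Pt) (M : Set (Sym2 Pt)) : Prop :=
  (∀ e ∈ M, ¬ e.IsDiag ∧ ∀ x ∈ e, x ∈ P) ∧ ∀ x ∈ P, ∃! e, e ∈ M ∧ x ∈ e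

/-- A plane (non-crossing) perfect matching on `P`. -/
def IsPlaneMatch (P : Set Pt) (M : Set (Sym2 Pt)) : Prop :=
  IsPerfMatch P M ∧ M.Pairwise fun e f => ¬ EdgesCross e f

/-- `P` is in convex position: every point of `P` is a vertex of the convex hull. -/
def ConvexPosition (P : Set Pt) : Prop :=
  ∀ x ∈ P, x ∉ convexHull ℝ (P \ {x})

/-- No three points of `P` are collinear. -/
def NoThreeCollinear (P : Set Pt) : Prop :=
  ∀ x ∈ P, ∀ y ∈ P, ∀ z ∈ P, x ≠ y → x ≠ z → y ≠ z →
    ¬ Collinear ℝ ({x, y, z} : Set Pt)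

/-- `e` is an edge of the convex hull of `P`: its endpoints are distinct points of `P` and
the segment joining them lies on the boundary of the convex hull of `P`. -/
def IsHullEdge (P : Set Pt) (e : Sym2 Pt) : Prop :=
  ∃ a b : Pt, e = s(a, b) ∧ a ∈ P ∧ b ∈ P ∧ a ≠ b ∧
    segment ℝ a b ⊆ frontier (convexHull ℝ P)

/-!
Every matching edge `cd` splits the other points into its two sides. If a side contains a
point `x`, it also contains the partner `y` of `x`, for otherwise `xy` would cross `cd` (in
convex position two segments whose endpoints separate each other's lines do cross). Moreover
the side of `xy` facing away from `cd` is a proper part of the side of `cd`, so descending in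
this way ends at a matching edge with no point beyond it: a hull edge. A third point lies
strictly on one side of `cd`, producing a hull edge there; the other closed side produces a
second one, possibly `cd` itself.
-/

/-- Twice the signed area of the triangle `xyz`: positive iff `z` lies to the left of the line
directed from `x` to `y`. -/
def orient (x y z : Pt) : ℝ :=
  (y 0 - x 0) * (z 1 - x 1) - (y 1 - x 1) * (z 0 - x 0)

lemma orient_swap (x y z : Pt) : orient y x z = -orient x y z := by
  unfold orient; ring

@[simp] lemma orient_self_left (x y : Pt) : orient x y x = 0 := by
  unfold orient; ring

@[simp] lemma orient_self_right (x y : Pt) : orient x y y = 0 := by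
  unfold orient; ring

lemma orient_add_smul (x y u v : Pt) {t s : ℝ} (h : t + s = 1) :
    orient x y (t • u + s • v) = t * orient x y u + s * orient x y v := by
  obtain rfl : s = 1 - t := by linarith
  simp only [orient, PiLp.add_apply, PiLp.smul_apply, smul_eq_mul]
  ring

lemma orient_pos_of_mem_openSegment {x y u v q : Pt} (hu : 0 ≤ orient x y u)
    (hv : 0 < orient x y v) (hq : q ∈ openSegment ℝ u v) : 0 < orient x y q := by
  obtain ⟨t, s, ht, hs, hts, rfl⟩ := hq
  rw [orient_add_smul x y u v hts]
  positivity

lemma ne_left_of_orient_ne_zero {x y z : Pt} (h : orient x y z ≠ 0) : z ≠ x := by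
  rintro rfl; simp at h

lemma ne_right_of_orient_ne_zero {x y z : Pt} (h : orient x y z ≠ 0) : z ≠ y := by
  rintro rfl; simp at h

lemma Pt.ext_coord {x y : Pt} (h0 : x 0 = y 0) (h1 : x 1 = y 1) : x = y := by
  ext i; fin_cases i <;> assumption

lemma collinear_of_orient_eq_zero {x y z : Pt} (hxy : x ≠ y) (h : orient x y z = 0) :
    Collinear ℝ ({x, y, z} : Set Pt) := by
  obtain ⟨r, hr⟩ : ∃ r : ℝ, z = x + r • (y - x) := by
    unfold orient at h
    by_cases h0 : y 0 - x 0 = 0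
    · have h1 : y 1 - x 1 ≠ 0 := fun h1 => hxy (Pt.ext_coord (by linarith) (by linarith))
      refine ⟨(z 1 - x 1) / (y 1 - x 1), Pt.ext_coord ?_ ?_⟩ <;>
        simp only [PiLp.add_apply, PiLp.sub_apply, PiLp.smul_apply, smul_eq_mul] <;>
        field_simp <;> nlinarith
    · refine ⟨(z 0 - x 0) / (y 0 - x 0), Pt.ext_coord ?_ ?_⟩ <;>
        simp only [PiLp.add_apply, PiLp.sub_apply, PiLp.smul_apply, smul_eq_mul] <;>
        field_simp <;> nlinarith
  rw [collinear_iff_of_mem (Set.mem_insert x {y, z})]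
  refine ⟨y - x, fun p hp => ?_⟩
  simp only [Set.mem_insert_iff, Set.mem_singleton_iff] at hp
  rcases hp with rfl | rfl | rfl
  · exact ⟨0, by simp⟩
  · exact ⟨1, by simp⟩
  · exact ⟨r, by rw [hr, vadd_eq_add, add_comm]⟩

lemma NoThreeCollinear.orient_ne_zero {P : Set Pt} (hcol : NoThreeCollinear P) {x y z : Pt}
    (hx : x ∈ P) (hy : y ∈ P) (hz : z ∈ P) (hxy : x ≠ y) (hxz : x ≠ z) (hyz : y ≠ z) :
    orient x y z ≠ 0 :=
  fun h => hcol x hx y hy z hz hxy hxz hyz (collinear_of_orient_eq_zero hxy h)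

lemma ConvexPosition.notMem_segment {P : Set Pt} (hconv : ConvexPosition P) {x y u v p : Pt}
    (hx : x ∈ P) (hy : y ∈ P) (hu : u ∈ P) (hv : v ∈ P) (hyx : y ≠ x) (hux : u ≠ x)
    (hvx : v ≠ x) (hp : p ∈ segment ℝ u v) : x ∉ segment ℝ p y := by
  intro hxp
  have hsub : ({u, v, y} : Set Pt) ⊆ P \ {x} := by
    simp [Set.insert_subset_iff, *]
  have hpc : p ∈ convexHull ℝ ({u, v, y} : Set Pt) :=
    convexHull_mono (by simp [Set.insert_subset_iff]) (segment_subset_convexHull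
      (Set.mem_insert u {v}) (Set.mem_insert_of_mem u rfl) hp)
  exact hconv x hx (convexHull_mono hsub ((convex_convexHull ℝ _).segment_subset hpc
    (subset_convexHull ℝ _ (by simp)) hxp))

/-- The segment `uv` meets the line `xy`; convex position forbids the meeting point from lying
outside the segment `xy`. -/
lemma ConvexPosition.segCross_of_orient {P : Set Pt} (hconv : ConvexPosition P) {x y u v : Pt}
    (hx : x ∈ P) (hy : y ∈ P) (hxy : x ≠ y) (hu : u ∈ P) (hv : v ∈ P)
    (hσu : 0 < orient x y u) (hσv : orient x y v < 0) : SegCross x y u v := by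
  have hD : 0 < orient x y u - orient x y v := by linarith
  set t : ℝ := orient x y u / (orient x y u - orient x y v)
  have ht0 : 0 < t := div_pos hσu hD
  have ht1 : t < 1 := by rw [div_lt_one hD]; linarith
  set p : Pt := (1 - t) • u + t • v
  have hpuv : p ∈ openSegment ℝ u v := ⟨1 - t, t, by linarith, ht0, by ring, rfl⟩
  have hσp : orient x y p = 0 := by
    simp only [p, orient_add_smul x y u v (sub_add_cancel 1 t), t]
    field_simp; ring
  have hpseg := openSegment_subset_segment ℝ u v hpuv
  have hux := ne_left_of_orient_ne_zero hσu.ne'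
  have huy := ne_right_of_orient_ne_zero hσu.ne'
  have hvx := ne_left_of_orient_ne_zero hσv.ne
  have hvy := ne_right_of_orient_ne_zero hσv.ne
  rcases (collinear_of_orient_eq_zero hxy hσp).wbtw_or_wbtw_or_wbtw with hw | hw | hw
  · exact absurd hw.symm.mem_segment (hconv.notMem_segment hy hx hu hv hxy huy hvy hpseg)
  · rcases eq_or_ne p x with hpx | hpx
    · exact (hconv.notMem_segment hx hy hu hv hxy.symm hux hvx (hpx ▸ hpseg)
        (left_mem_segment ℝ x y)).elim
    rcases eq_or_ne p y with hpy | hpy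
    · exact (hconv.notMem_segment hy hx hu hv hxy huy hvy (hpy ▸ hpseg)
        (left_mem_segment ℝ y x)).elim
    exact ⟨p, mem_openSegment_of_ne_left_right hpx.symm hpy.symm hw.symm.mem_segment, hpuv⟩
  · exact absurd hw.mem_segment (hconv.notMem_segment hx hy hu hv hxy.symm hux hvx hpseg)

lemma isHullEdge_of_forall_orient_nonpos {P : Set Pt} {a b : Pt} (ha : a ∈ P) (hb : b ∈ P)
    (hab : a ≠ b) (hside : ∀ z ∈ P, orient a b z ≤ 0) : IsHullEdge P s(a, b) := by
  refine ⟨a, b, rfl, ha, hb, hab, fun w hw =>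
    ⟨subset_closure (segment_subset_convexHull ha hb hw), ?_⟩⟩
  have hhalf : convexHull ℝ P ⊆ {z | orient a b z ≤ 0} := by
    refine convexHull_min hside fun z₁ hz₁ z₂ hz₂ t s ht hs hts => ?_
    simp only [Set.mem_ofPred_eq, orient_add_smul a b z₁ z₂ hts] at hz₁ hz₂ ⊢
    nlinarith
  have hσw : orient a b w = 0 := by
    obtain ⟨t, s, -, -, hts, rfl⟩ := hw
    simp [orient_add_smul a b a b hts]
  -- for small `r > 0`, `w + r • ν` is still in the hull but strictly left of `ab`
  set ν : Pt := !₂[-(b 1 - a 1), b 0 - a 0]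
  have hlen : 0 < (b 0 - a 0) ^ 2 + (b 1 - a 1) ^ 2 := by
    by_contra! h
    exact hab (Pt.ext_coord (by nlinarith) (by nlinarith))
  have hpush : ∀ r : ℝ, orient a b (w + r • ν) = r * ((b 0 - a 0) ^ 2 + (b 1 - a 1) ^ 2) := by
    intro r
    simp only [orient, ν, PiLp.add_apply, PiLp.smul_apply, smul_eq_mul, Matrix.cons_val_zero,
      Matrix.cons_val_one, Matrix.cons_val_fin_one] at hσw ⊢
    linear_combination hσw
  intro hint
  have hlim : Filter.Tendsto (fun r : ℝ => w + r • ν) (nhdsWithin 0 (Set.Ioi 0)) (nhds w) := by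
    have : Continuous (fun r : ℝ => w + r • ν) := by fun_prop
    simpa using (this.tendsto 0).mono_left nhdsWithin_le_nhds
  obtain ⟨r, hr, hrpos⟩ :=
    ((hlim.eventually (mem_interior_iff_mem_nhds.mp hint)).and self_mem_nhdsWithin).exists
  have := hhalf hr
  simp only [Set.mem_ofPred_eq, hpush] at this
  nlinarith [mul_pos (Set.mem_Ioi.mp hrpos) hlen]

def leftSide (P : Set Pt) (c d : Pt) : Set Pt := {z ∈ P | 0 < orient c d z}

lemma isHullEdge_of_leftSide_eq_empty {P : Set Pt} {a b : Pt} (ha : a ∈ P) (hb : b ∈ P)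
    (hab : a ≠ b) (h : leftSide P a b = ∅) : IsHullEdge P s(a, b) :=
  isHullEdge_of_forall_orient_nonpos ha hb hab fun _ hz =>
    not_lt.mp fun hpos => h.subset ⟨hz, hpos⟩

namespace IsPlaneMatch

variable {P : Set Pt} {M : Set (Sym2 Pt)}

lemma mem_of_mk_mem (hM : IsPlaneMatch P M) {x y : Pt} (h : s(x, y) ∈ M) :
    x ∈ P ∧ y ∈ P ∧ x ≠ y := by
  obtain ⟨hdiag, hmem⟩ := hM.1.1 _ h
  exact ⟨hmem x (Sym2.mem_mk_left x y), hmem y (Sym2.mem_mk_right x y), hdiag⟩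

lemma exists_partner (hM : IsPlaneMatch P M) {x : Pt} (hx : x ∈ P) : ∃ y, s(x, y) ∈ M := by
  obtain ⟨e, ⟨he, hxe⟩, -⟩ := hM.1.2 x hx
  exact ⟨Sym2.Mem.other hxe, (Sym2.other_spec hxe).symm ▸ he⟩

lemma eq_of_mem (hM : IsPlaneMatch P M) {x : Pt} {e f : Sym2 Pt} (hx : x ∈ P) (he : e ∈ M)
    (hf : f ∈ M) (hxe : x ∈ e) (hxf : x ∈ f) : e = f :=
  (hM.1.2 x hx).unique ⟨he, hxe⟩ ⟨hf, hxf⟩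

lemma not_segCross (hM : IsPlaneMatch P M) {x y u v : Pt} (h₁ : s(x, y) ∈ M)
    (h₂ : s(u, v) ∈ M) (hne : s(x, y) ≠ s(u, v)) : ¬ SegCross x y u v :=
  fun hc => hM.2 h₁ h₂ hne ⟨x, y, u, v, rfl, rfl, hc⟩

lemma orient_partner_pos (hM : IsPlaneMatch P M) (hconv : ConvexPosition P)
    (hcol : NoThreeCollinear P) {c d x y : Pt} (hcd : s(c, d) ∈ M) (hxy : s(x, y) ∈ M)
    (hx : 0 < orient c d x) : 0 < orient c d y := by
  obtain ⟨hcP, hdP, hcd'⟩ := hM.mem_of_mk_mem hcd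
  obtain ⟨hxP, hyP, -⟩ := hM.mem_of_mk_mem hxy
  have hne : s(x, y) ≠ s(c, d) := fun h => by
    rcases Sym2.mem_iff.mp (h ▸ Sym2.mem_mk_left x y) with rfl | rfl <;> simp at hx
  have hyc : y ≠ c := by
    rintro rfl
    exact hne (hM.eq_of_mem hyP hxy hcd (Sym2.mem_mk_right x y) (Sym2.mem_mk_left y d))
  have hyd : y ≠ d := by
    rintro rfl
    exact hne (hM.eq_of_mem hyP hxy hcd (Sym2.mem_mk_right x y) (Sym2.mem_mk_right c y))
  refine (hcol.orient_ne_zero hcP hdP hyP hcd' hyc.symm hyd.symm).lt_or_gt.resolve_left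
    fun hy => hM.not_segCross hcd hxy hne.symm ?_
  exact hconv.segCross_of_orient hcP hdP hcd' hxP hyP hx hy

lemma leftSide_ssubset (hM : IsPlaneMatch P M) (hconv : ConvexPosition P)
    (hcol : NoThreeCollinear P) {c d x y : Pt} (hcd : s(c, d) ∈ M) (hxy : s(x, y) ∈ M)
    (hx : 0 < orient c d x) (hc : orient x y c < 0) : leftSide P x y ⊂ leftSide P c d := by
  obtain ⟨hcP, hdP, hcd'⟩ := hM.mem_of_mk_mem hcd
  obtain ⟨hxP, hyP, hxy'⟩ := hM.mem_of_mk_mem hxy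
  have hy := hM.orient_partner_pos hconv hcol hcd hxy hx
  have hd : orient x y d < 0 := by
    refine (hcol.orient_ne_zero hxP hyP hdP hxy' (ne_right_of_orient_ne_zero hx.ne')
      (ne_right_of_orient_ne_zero hy.ne')).lt_or_gt.resolve_right fun hd => ?_
    have hdc : s(d, c) ∈ M := by rwa [Sym2.eq_swap]
    exact lt_asymm hc (hM.orient_partner_pos hconv hcol hxy hdc hd)
  refine ⟨fun z ⟨hzP, hz⟩ => ⟨hzP, ?_⟩, fun hsub => by simpa using (hsub ⟨hxP, hx⟩).2⟩
  have hzc : z ≠ c := by rintro rfl; linarith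
  have hzd : z ≠ d := by rintro rfl; linarith
  refine (hcol.orient_ne_zero hcP hdP hzP hcd' hzc.symm hzd.symm).lt_or_gt.resolve_left
    fun hz' => ?_
  -- the crossing point of `cd` and `xz` would lie on both sides of the line `xy`
  obtain ⟨q, hqcd, hqxz⟩ := hconv.segCross_of_orient hcP hdP hcd' hxP hzP hx hz'
  have hright : 0 < orient y x q := orient_pos_of_mem_openSegment
    (by rw [orient_swap]; linarith) (by rw [orient_swap]; linarith) hqcd
  have hleft : 0 < orient x y q := orient_pos_of_mem_openSegment (by simp) hz hqxz
  rw [orient_swap] at hright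
  linarith

lemma exists_hullEdge_subset_leftSide (hM : IsPlaneMatch P M) (hconv : ConvexPosition P)
    (hcol : NoThreeCollinear P) (hfin : P.Finite) {c d : Pt} (hcd : s(c, d) ∈ M)
    (hne : (leftSide P c d).Nonempty) :
    ∃ a b, s(a, b) ∈ M ∧ a ∈ leftSide P c d ∧ b ∈ leftSide P c d ∧ IsHullEdge P s(a, b) := by
  induction hk : (leftSide P c d).ncard using Nat.strong_induction_on generalizing c d with
  | _ k ih =>
  obtain ⟨hcP, -, -⟩ := hM.mem_of_mk_mem hcd
  obtain ⟨x, hxP, hx⟩ := hne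
  obtain ⟨y, hxy⟩ := hM.exists_partner hxP
  obtain ⟨-, hyP, hxy'⟩ := hM.mem_of_mk_mem hxy
  have hy := hM.orient_partner_pos hconv hcol hcd hxy hx
  obtain ⟨a, b, hab, ha, hb, hc⟩ : ∃ a b, s(a, b) ∈ M ∧ 0 < orient c d a ∧ 0 < orient c d b ∧
      orient a b c < 0 := by
    rcases (hcol.orient_ne_zero hxP hyP hcP hxy' (ne_left_of_orient_ne_zero hx.ne')
      (ne_left_of_orient_ne_zero hy.ne')).lt_or_gt with h | h
    · exact ⟨x, y, hxy, hx, hy, h⟩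
    · exact ⟨y, x, by rwa [Sym2.eq_swap], hy, hx, by rw [orient_swap]; linarith⟩
  obtain ⟨haP, hbP, hab'⟩ := hM.mem_of_mk_mem hab
  have hsub := hM.leftSide_ssubset hconv hcol hcd hab ha hc
  rcases (leftSide P a b).eq_empty_or_nonempty with hempty | hne
  · exact ⟨a, b, hab, ⟨haP, ha⟩, ⟨hbP, hb⟩,
      isHullEdge_of_leftSide_eq_empty haP hbP hab' hempty⟩
  · obtain ⟨a', b', hab'', ha', hb', hull⟩ :=
      ih _ (hk ▸ Set.ncard_lt_ncard hsub (hfin.subset fun _ hz => hz.1)) hab hne rfl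
    exact ⟨a', b', hab'', hsub.subset ha', hsub.subset hb', hull⟩

lemma exists_hullEdge_orient_nonneg (hM : IsPlaneMatch P M) (hconv : ConvexPosition P)
    (hcol : NoThreeCollinear P) (hfin : P.Finite) {c d : Pt} (hcd : s(c, d) ∈ M) :
    ∃ a b, s(a, b) ∈ M ∧ 0 ≤ orient c d a ∧ 0 ≤ orient c d b ∧ IsHullEdge P s(a, b) := by
  rcases (leftSide P c d).eq_empty_or_nonempty with hempty | hne
  · obtain ⟨hcP, hdP, hcd'⟩ := hM.mem_of_mk_mem hcd
    exact ⟨c, d, hcd, by simp, by simp, isHullEdge_of_leftSide_eq_empty hcP hdP hcd' hempty⟩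
  · obtain ⟨a, b, hab, ha, hb, hull⟩ :=
      hM.exists_hullEdge_subset_leftSide hconv hcol hfin hcd hne
    exact ⟨a, b, hab, ha.2.le, hb.2.le, hull⟩

end IsPlaneMatch

theorem plane_matching_two_hull_edges_general (n : ℕ) (h4 : 4 ≤ n)
    (P : Set Pt) (hcard : P.ncard = n)
    (hconv : ConvexPosition P) (hcol : NoThreeCollinear P)
    (M : Set (Sym2 Pt)) (hM : IsPlaneMatch P M) :
    ∃ e ∈ M, ∃ f ∈ M, e ≠ f ∧ IsHullEdge P e ∧ IsHullEdge P f := by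
  have hfin : P.Finite := Set.finite_of_ncard_ne_zero (by omega)
  obtain ⟨c, hcP⟩ : P.Nonempty := Set.nonempty_of_ncard_ne_zero (by omega)
  obtain ⟨d, hcd⟩ := hM.exists_partner hcP
  obtain ⟨-, hdP, hcd'⟩ := hM.mem_of_mk_mem hcd
  obtain ⟨w, hwP, hw⟩ : ∃ w ∈ P, w ∉ ({c, d} : Set Pt) :=
    Set.exists_mem_notMem_of_ncard_lt_ncard (by rw [Set.ncard_pair hcd']; omega)
      (Set.toFinite _)
  simp only [Set.mem_insert_iff, Set.mem_singleton_iff, not_or] at hw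
  wlog hleft : 0 < orient c d w generalizing c d
  · have hσw := hcol.orient_ne_zero hcP hdP hwP hcd' (Ne.symm hw.1) (Ne.symm hw.2)
    refine this d hdP c (by rwa [Sym2.eq_swap]) hcP hcd'.symm hw.symm ?_
    rw [orient_swap]
    exact neg_pos.mpr (hσw.lt_or_gt.resolve_right hleft)
  obtain ⟨a, b, hab, ha, -, hull⟩ :=
    hM.exists_hullEdge_subset_leftSide hconv hcol hfin hcd ⟨w, hwP, hleft⟩
  obtain ⟨a', b', hab', ha', hb', hull'⟩ :=
    hM.exists_hullEdge_orient_nonneg hconv hcol hfin (show s(d, c) ∈ M by rwa [Sym2.eq_swap])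
  refine ⟨_, hab, _, hab', fun h => ?_, hull, hull'⟩
  rw [orient_swap] at ha' hb'
  rcases Sym2.mem_iff.mp (h ▸ Sym2.mem_mk_left a b) with rfl | rfl <;> linarith [ha.2]

/-- For `n` points in convex position (`n` even, `n ≥ 4`, no three collinear),
every plane perfect matching on `P` contains at least two convex hull edges of `P`. -/
theorem plane_matching_two_hull_edges (n : ℕ) (hn : Even n) (h4 : 4 ≤ n)
    (P : Set Pt) (hfin : P.Finite) (hcard : P.ncard = n)
    (hconv : ConvexPosition P) (hcol : NoThreeCollinear P)
    (M : Set (Sym2 Pt)) (hM : IsPlaneMatch P M) :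
    ∃ e ∈ M, ∃ f ∈ M, e ≠ f ∧ IsHullEdge P e ∧ IsHullEdge P f :=
  plane_matching_two_hull_edges_general n h4 P hcard hconv hcol M hM
end
end

section
/- Let P = {p_0, ..., p_{n-1}} be n points in convex position in the plane, listed in cyclic (radial) order, with n even. For 0 ≤ i < n/2 define M_i = { p_{i+j-1} p_{n+i-j} : j = 1, ..., n/2 } (indices mod n). Then each M_i is a plane perfect matching of P, and the matchings M_0, ..., M_{n/2 - 1} are pairwise edge-disjoint; hence exactly n/2 plane perfect matchings can be packed into the complete geometric graph on P. -/
/-!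
Reindexing from `i`, the matching `M_i` pairs the `j`-th and `(n-1-j)`-th points of the window
`p i, …, p (i+n-1)`, so its chords are nested. A chord `ab` is not crossed by a chord nested inside
it, because all points strictly between `a` and `b` in the window lie strictly on one side of the
line `ab`. It suffices to see this for consecutive points `k`, `k'`: otherwise the hull edge `kk'`
would meet the line `ab` inside the segment `ab` at a boundary point of the hull, and a supporting
line there would contain the three non-collinear points `a`, `b`, `k`. Finally the endpoint indices
of an edge of `M_i` sum to `2i - 1` modulo `n`, so the matchings for distinct `i < n/2` share no
edge.
-/

noncomputable section

open Set Module

section LinearGeometry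

variable {E : Type*} [AddCommGroup E] [Module ℝ E]

theorem exists_ne_zero_apply_eq (hE : 1 < finrank ℝ E) (a b : E) :
    ∃ f : E →ₗ[ℝ] ℝ, f ≠ 0 ∧ f a = f b := by
  have hlt : ℝ ∙ (b - a) < ⊤ := by
    refine lt_top_iff_ne_top.2 fun h => ?_
    have : finrank ℝ (ℝ ∙ (b - a)) ≤ 1 := by
      simpa using finrank_span_le_card (R := ℝ) ({b - a} : Set E)
    rw [h, finrank_top] at this
    omega
  obtain ⟨f, hf, hle⟩ := (ℝ ∙ (b - a)).exists_le_ker_of_lt_top hlt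
  have hab := hle (Submodule.mem_span_singleton_self (b - a))
  rw [LinearMap.mem_ker, map_sub, sub_eq_zero] at hab
  exact ⟨f, hf, hab.symm⟩

theorem exists_mem_openSegment_apply_eq {f : E →ₗ[ℝ] ℝ} {c : ℝ} {u v : E}
    (h : (f u - c) * (f v - c) < 0) : ∃ x ∈ openSegment ℝ u v, f x = c := by
  have hc : c ∈ openSegment ℝ (f u) (f v) := by
    rcases mul_neg_iff.1 h with ⟨hu, hv⟩ | ⟨hu, hv⟩
    · rw [openSegment_symm, openSegment_eq_Ioo (by linarith)]
      exact ⟨by linarith, by linarith⟩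
    · rw [openSegment_eq_Ioo (by linarith)]
      exact ⟨by linarith, by linarith⟩
  rw [← LinearMap.coe_toAffineMap, ← image_openSegment] at hc
  exact hc

theorem disjoint_openSegment_of_mul_pos {f : E →ₗ[ℝ] ℝ} {a b c d : E} (hab : f a = f b)
    (h : 0 < (f c - f a) * (f d - f a)) : Disjoint (openSegment ℝ a b) (openSegment ℝ c d) := by
  rw [Set.disjoint_left]
  rintro x hxab ⟨s, t, hs, ht, hst, rfl⟩
  have hfx : f (s • c + t • d) = f a := by
    have := mem_image_of_mem f.toAffineMap hxab
    rwa [image_openSegment, LinearMap.coe_toAffineMap, ← hab, openSegment_same] at this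
  rw [map_add, map_smul, map_smul, smul_eq_mul, smul_eq_mul] at hfx
  have key : s * (f c - f a) ^ 2 + t * ((f c - f a) * (f d - f a)) = 0 := by
    linear_combination (f c - f a) * hfx - f a * (f c - f a) * hst
  linarith [mul_pos ht h, mul_nonneg hs.le (sq_nonneg (f c - f a))]

variable {A : Set E}

theorem not_collinear_of_mem_extremePoints {x y z : E} (hx : x ∈ A.extremePoints ℝ)
    (hy : y ∈ A.extremePoints ℝ) (hz : z ∈ A.extremePoints ℝ) (hxy : x ≠ y) (hxz : x ≠ z)
    (hyz : y ≠ z) : ¬ Collinear ℝ {x, y, z} := by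
  intro h
  have endpoint {u v w : E} (hv : v ∈ A.extremePoints ℝ) (hu : u ∈ A) (hw : w ∈ A)
      (h : Wbtw ℝ u v w) : u = v ∨ w = v :=
    (mem_extremePoints_iff_forall_segment.1 hv).2 u hu w hw h.mem_segment
  rcases h.wbtw_or_wbtw_or_wbtw with h | h | h
  · rcases endpoint hy hx.1 hz.1 h with h | h <;> simp_all
  · rcases endpoint hz hy.1 hx.1 h with h | h <;> simp_all
  · rcases endpoint hx hz.1 hy.1 h with h | h <;> simp_all

theorem mem_segment_of_collinear {a b x : E} (ha : a ∈ A.extremePoints ℝ)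
    (hb : b ∈ A.extremePoints ℝ) (hab : a ≠ b) (hx : x ∈ A) (h : Collinear ℝ {a, b, x}) :
    x ∈ segment ℝ a b := by
  rcases h.wbtw_or_wbtw_or_wbtw with h | h | h
  · obtain h | rfl := (mem_extremePoints_iff_forall_segment.1 hb).2 a ha.1 x hx h.mem_segment
    · exact absurd h hab
    · exact right_mem_segment ℝ _ _
  · rw [segment_symm]
    exact h.mem_segment
  · obtain rfl | h := (mem_extremePoints_iff_forall_segment.1 ha).2 x hx b hb.1 h.mem_segment
    · exact left_mem_segment ℝ _ _
    · exact absurd h.symm hab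

variable [FiniteDimensional ℝ E]

theorem collinear_of_forall_apply_eq (hE : finrank ℝ E = 2) {f : E →ₗ[ℝ] ℝ} (hf : f ≠ 0)
    {s : Set E} {c : ℝ} (hs : ∀ x ∈ s, f x = c) : Collinear ℝ s := by
  have hker : vectorSpan ℝ s ≤ LinearMap.ker f := by
    rw [vectorSpan_def, Submodule.span_le]
    rintro _ ⟨x, hx, y, hy, rfl⟩
    simp [hs x hx, hs y hy]
  have := Module.Dual.finrank_ker_add_one_of_ne_zero hf
  have := Submodule.finrank_mono hker
  exact collinear_iff_finrank_le_one.2 (by omega)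

theorem apply_ne_of_mem_extremePoints (hE : finrank ℝ E = 2) {a b z : E}
    (ha : a ∈ A.extremePoints ℝ) (hb : b ∈ A.extremePoints ℝ) (hz : z ∈ A.extremePoints ℝ)
    (hab : a ≠ b) (hza : z ≠ a) (hzb : z ≠ b) {f : E →ₗ[ℝ] ℝ} (hf : f ≠ 0) (hfab : f a = f b) :
    f z ≠ f a := fun h =>
  not_collinear_of_mem_extremePoints ha hb hz hab hza.symm hzb.symm
    (collinear_of_forall_apply_eq hE hf (c := f a) (by simp [hfab.symm, h]))

theorem affineSpan_eq_top_of_not_collinear (hE : finrank ℝ E = 2) {s : Set E}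
    (h : ¬ Collinear ℝ s) : affineSpan ℝ s = ⊤ := by
  have hne : s.Nonempty := nonempty_iff_ne_empty.2 fun hs => h (hs ▸ collinear_empty ℝ E)
  rw [← AffineSubspace.direction_eq_top_iff_of_nonempty (hne.mono (subset_affineSpan ℝ s)),
    direction_affineSpan]
  by_contra hne_top
  have := Submodule.finrank_lt hne_top
  exact h (collinear_iff_finrank_le_one.2 (by omega))

end LinearGeometry

section NormedPlane

variable {V : Type*} [NormedAddCommGroup V] [NormedSpace ℝ V]

theorem Set.Finite.subset_extremePoints_convexHull {P : Set V} (hfin : P.Finite)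
    (hP : ∀ x ∈ P, x ∉ convexHull ℝ (P \ {x})) : P ⊆ (convexHull ℝ P).extremePoints ℝ := by
  intro x hx
  by_contra hext
  have hsub : (convexHull ℝ P).extremePoints ℝ ⊆ P \ {x} := fun y hy =>
    ⟨extremePoints_convexHull_subset hy, fun hyx => hext (mem_singleton_iff.1 hyx ▸ hy)⟩
  refine hP x hx ((hfin.sdiff.isCompact_convexHull ℝ).isClosed.closure_subset_iff.2
    (convexHull_mono hsub) ?_)
  rw [closure_convexHull_extremePoints (hfin.isCompact_convexHull ℝ) (convex_convexHull ℝ P)]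
  exact subset_convexHull ℝ P hx

theorem exists_forall_le_of_notMem_interior {A : Set V} (hA : Convex ℝ A)
    (hint : (interior A).Nonempty) {x : V} (hx : x ∉ interior A) :
    ∃ φ : StrongDual ℝ V, φ ≠ 0 ∧ ∀ y ∈ A, φ y ≤ φ x := by
  obtain ⟨φ, u, hφ, hA, hx⟩ := geometric_hahn_banach_of_nonempty_interior hA (convex_singleton x)
    (disjoint_singleton_right.2 hx) hint (singleton_nonempty x)
  exact ⟨φ, hφ, fun y hy => (hA y hy).trans (hx x rfl)⟩

theorem apply_eq_of_mem_openSegment_of_forall_le {A : Set V} {φ : StrongDual ℝ V} {x u v : V}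
    (hφ : ∀ y ∈ A, φ y ≤ φ x) (hx : x ∈ A) (hu : u ∈ A) (hv : v ∈ A)
    (h : x ∈ openSegment ℝ u v) : φ u = φ x :=
  (hφ u hu).antisymm ((ContinuousLinearMap.toExposed.isExposed.isExtreme.left_mem_of_mem_openSegment
    hu hv ⟨hx, hφ⟩ h).2 x hx)

variable [FiniteDimensional ℝ V]

theorem mem_interior_convexHull_of_mem_openSegment (hV : finrank ℝ V = 2) {P : Set V}
    {a b k k' x : V} (ha : a ∈ P) (hb : b ∈ P) (hk : k ∈ P) (hk' : k' ∈ P)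
    (habk : ¬ Collinear ℝ {a, b, k}) (hxab : x ∈ openSegment ℝ a b)
    (hxk : x ∈ openSegment ℝ k k') : x ∈ interior (convexHull ℝ P) := by
  by_contra hx
  have hint : (interior (convexHull ℝ P)).Nonempty := by
    rw [interior_convexHull_nonempty_iff_affineSpan_eq_top]
    exact affineSpan_eq_top_of_not_collinear hV fun hcol =>
      habk (hcol.subset (by simp [insert_subset_iff, ha, hb, hk]))
  have hxA : x ∈ convexHull ℝ P := (convex_convexHull ℝ P).openSegment_subset
    (subset_convexHull ℝ P ha) (subset_convexHull ℝ P hb) hxab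
  obtain ⟨φ, hφ, hφx⟩ := exists_forall_le_of_notMem_interior (convex_convexHull ℝ P) hint hx
  have support {u v : V} (hu : u ∈ P) (hv : v ∈ P) (h : x ∈ openSegment ℝ u v) : φ u = φ x :=
    apply_eq_of_mem_openSegment_of_forall_le hφx hxA (subset_convexHull ℝ P hu)
      (subset_convexHull ℝ P hv) h
  refine habk (collinear_of_forall_apply_eq hV (f := φ) (ContinuousLinearMap.coe_injective.ne hφ)
    (c := φ x) ?_)
  simp [support ha hb hxab, support hb ha (openSegment_symm ℝ a b ▸ hxab), support hk hk' hxk]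

theorem mul_pos_of_segment_subset_frontier (hV : finrank ℝ V = 2)
    {P : Set V} (hP : P ⊆ (convexHull ℝ P).extremePoints ℝ) {a b k k' : V}
    (ha : a ∈ P) (hb : b ∈ P) (hab : a ≠ b) (hk : k ∈ P \ {a, b}) (hk' : k' ∈ P \ {a, b})
    (hedge : segment ℝ k k' ⊆ frontier (convexHull ℝ P))
    {f : V →ₗ[ℝ] ℝ} (hf : f ≠ 0) (hfab : f a = f b) :
    0 < (f k - f a) * (f k' - f a) := by
  simp only [mem_sdiff, mem_insert_iff, mem_singleton_iff, not_or] at hk hk'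
  obtain ⟨hk, hka, hkb⟩ := hk
  obtain ⟨hk', hk'a, hk'b⟩ := hk'
  have off_line {z : V} (hz : z ∈ P) (hza : z ≠ a) (hzb : z ≠ b) : f z - f a ≠ 0 :=
    sub_ne_zero.2 (apply_ne_of_mem_extremePoints hV (hP ha) (hP hb) (hP hz) hab hza hzb hf hfab)
  refine (mul_ne_zero (off_line hk hka hkb) (off_line hk' hk'a hk'b)).symm.lt_of_le
    (not_lt.1 fun hneg => ?_)
  -- Otherwise `kk'` meets the line `ab` at a point `x` of the open segment `ab`, and two crossing
  -- open segments between points of `P` meet only inside the hull.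
  obtain ⟨x, hxk, hfx⟩ := exists_mem_openSegment_apply_eq hneg
  have hxA : x ∈ convexHull ℝ P := (convex_convexHull ℝ P).openSegment_subset
    (subset_convexHull ℝ P hk) (subset_convexHull ℝ P hk') hxk
  have hx_ne {z : V} (hz : z ∈ P) (hkz : k ≠ z) : z ≠ x := fun hzx =>
    hkz ((hP hz).2 (subset_convexHull ℝ P hk) (subset_convexHull ℝ P hk') (hzx ▸ hxk))
  have hxab : x ∈ openSegment ℝ a b := mem_openSegment_of_ne_left_right (hx_ne ha hka)
    (hx_ne hb hkb) (mem_segment_of_collinear (hP ha) (hP hb) hab hxA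
      (collinear_of_forall_apply_eq hV hf (c := f a) (by simp [hfab.symm, hfx])))
  have habk := not_collinear_of_mem_extremePoints (hP ha) (hP hb) (hP hk) hab (Ne.symm hka)
    (Ne.symm hkb)
  exact (hedge (openSegment_subset_segment ℝ k k' hxk)).2
    (mem_interior_convexHull_of_mem_openSegment hV ha hb hk hk' habk hxab hxk)

end NormedPlane

theorem mul_pos_of_forall_mul_succ_pos {u : ℕ → ℝ} {a b : ℕ}
    (h : ∀ t, a ≤ t → t < b → 0 < u t * u (t + 1)) {s t : ℕ} (has : a ≤ s) (hst : s < t)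
    (htb : t ≤ b) : 0 < u s * u t := by
  induction t, hst using Nat.le_induction with
  | base => exact h s has (by omega)
  | succ t hst ih =>
    nlinarith [mul_pos (ih (by omega)) (h t (by omega) (by omega)), sq_nonneg (u t)]

theorem IsHullEdge.segment_subset_frontier {P : Set Pt} {a b : Pt} (h : IsHullEdge P s(a, b)) :
    segment ℝ a b ⊆ frontier (convexHull ℝ P) := by
  obtain ⟨a', b', he, -, -, -, hseg⟩ := h
  rcases Sym2.eq_iff.1 he with ⟨rfl, rfl⟩ | ⟨rfl, rfl⟩
  · exact hseg
  · rwa [segment_symm]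

theorem edgesCross_mk_iff (a b c d : Pt) : EdgesCross s(a, b) s(c, d) ↔ SegCross a b c d := by
  have openSegment_eq {x y x' y' : Pt} (h : s(x, y) = s(x', y')) :
      openSegment ℝ x y = openSegment ℝ x' y' := by
    rcases Sym2.eq_iff.1 h with ⟨rfl, rfl⟩ | ⟨rfl, rfl⟩
    · rfl
    · exact openSegment_symm ℝ _ _
  refine ⟨fun ⟨a', b', c', d', he, hf, h⟩ => ?_, fun h => ⟨a, b, c, d, rfl, rfl, h⟩⟩
  rwa [SegCross, openSegment_eq he, openSegment_eq hf]

def nestedMatching {α : Type*} (q : ℕ → α) (n : ℕ) : Set (Sym2 α) :=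
  (fun j => s(q j, q (n - 1 - j))) '' Iio (n / 2)

section NestedMatching

variable {q : ℕ → Pt} {n : ℕ}

theorem isPerfMatch_nestedMatching (hn : Even n) (hq : InjOn q (Iio n)) :
    IsPerfMatch (q '' Iio n) (nestedMatching q n) := by
  obtain ⟨m, rfl⟩ := hn
  have hm : (m + m) / 2 = m := by omega
  have mem_edge {t j : ℕ} (ht : t < m + m) (hj : j < m) :
      q t ∈ s(q j, q (m + m - 1 - j)) ↔ t = j ∨ t = m + m - 1 - j := by
    rw [Sym2.mem_iff, hq.eq_iff ht (by simp; omega), hq.eq_iff ht (by simp; omega)]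
  refine ⟨?_, ?_⟩
  · rintro _ ⟨j, hj, rfl⟩
    rw [mem_Iio, hm] at hj
    refine ⟨?_, ?_⟩
    · rw [Sym2.mk_isDiag_iff]
      exact hq.ne (by simp; omega) (by simp; omega) (by omega)
    · rintro x hx
      rcases Sym2.mem_iff.1 hx with rfl | rfl <;> exact mem_image_of_mem q (by simp; omega)
  · rintro _ ⟨t, ht, rfl⟩
    rw [mem_Iio] at ht
    refine ⟨s(q (min t (m + m - 1 - t)), q (m + m - 1 - min t (m + m - 1 - t))),
      ⟨⟨_, by simp; omega, rfl⟩, (mem_edge ht (by omega)).2 (by omega)⟩, ?_⟩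
    rintro _ ⟨⟨j, hj, rfl⟩, hx⟩
    rw [mem_Iio, hm] at hj
    rw [mem_edge ht hj] at hx
    obtain rfl : j = min t (m + m - 1 - t) := by omega
    rfl

variable (hq : InjOn q (Iio n))
  (hP : q '' Iio n ⊆ (convexHull ℝ (q '' Iio n)).extremePoints ℝ)
  (hedge : ∀ t, t + 1 < n → segment ℝ (q t) (q (t + 1)) ⊆ frontier (convexHull ℝ (q '' Iio n)))
include hq hP hedge

theorem not_segCross_of_lt_of_lt_of_lt {a b c d : ℕ} (hac : a < c) (hcd : c < d) (hdb : d < b)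
    (hb : b < n) : ¬ SegCross (q a) (q b) (q c) (q d) := by
  have hV : finrank ℝ Pt = 2 := finrank_euclideanSpace_fin
  have hmem {t : ℕ} (ht : t < n) : q t ∈ q '' Iio n := mem_image_of_mem q ht
  have hne {s t : ℕ} (hs : s < n) (ht : t < n) (hst : s ≠ t) : q s ≠ q t := hq.ne hs ht hst
  have hinner {t : ℕ} (h₁ : a < t) (h₂ : t < b) : q t ∈ q '' Iio n \ {q a, q b} := by
    simp only [mem_sdiff, mem_insert_iff, mem_singleton_iff, not_or]
    exact ⟨hmem (by omega), hne (by omega) (by omega) (by omega), hne (by omega) hb (by omega)⟩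
  obtain ⟨f, hf, hfab⟩ := exists_ne_zero_apply_eq (by omega) (q a) (q b)
  -- The sign of `f - f (q a)` is constant along `q (a + 1), …, q (b - 1)`, edge by edge.
  have hside : 0 < (f (q c) - f (q a)) * (f (q d) - f (q a)) :=
    mul_pos_of_forall_mul_succ_pos (u := fun t => f (q t) - f (q a)) (a := a + 1) (b := b - 1)
      (fun t h₁ h₂ => mul_pos_of_segment_subset_frontier hV hP (hmem (by omega)) (hmem hb)
        (hne (by omega) hb (by omega)) (hinner (by omega) (by omega))
        (hinner (by omega) (by omega)) (hedge t (by omega)) hf hfab)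
      (by omega) hcd (by omega)
  exact fun ⟨x, hxab, hxcd⟩ =>
    disjoint_left.1 (disjoint_openSegment_of_mul_pos hfab hside) hxab hxcd

theorem pairwise_not_edgesCross_nestedMatching :
    (nestedMatching q n).Pairwise fun e f => ¬ EdgesCross e f := by
  have nested {j j' : ℕ} (hjj' : j < j') (hj' : j' < n / 2) :
      ¬ SegCross (q j) (q (n - 1 - j)) (q j') (q (n - 1 - j')) :=
    not_segCross_of_lt_of_lt_of_lt hq hP hedge hjj' (by omega) (by omega) (by omega)
  rintro _ ⟨j, hj, rfl⟩ _ ⟨j', hj', rfl⟩ hne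
  rw [mem_Iio] at hj hj'
  rw [edgesCross_mk_iff]
  rcases lt_trichotomy j j' with h | rfl | h
  · exact nested h hj'
  · exact absurd rfl hne
  · rw [SegCross, inter_comm]
    exact nested h hj

theorem isPlaneMatch_nestedMatching (hn : Even n) :
    IsPlaneMatch (q '' Iio n) (nestedMatching q n) :=
  ⟨isPerfMatch_nestedMatching hn hq, pairwise_not_edgesCross_nestedMatching hq hP hedge⟩

end NestedMatching

section Periodic

open Function

variable {α : Type*} {p : ℕ → α} {n : ℕ}

theorem Function.Periodic.eq_iff_modEq (hp : Periodic p n) (hinj : InjOn p (Iio n)) (hn : 0 < n)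
    {a b : ℕ} : p a = p b ↔ a ≡ b [MOD n] := by
  rw [← hp.map_mod_nat a, ← hp.map_mod_nat b]
  exact hinj.eq_iff (Nat.mod_lt a hn) (Nat.mod_lt b hn)

theorem Function.Periodic.injOn_add (hp : Periodic p n) (hinj : InjOn p (Iio n)) (hn : 0 < n)
    (i : ℕ) : InjOn (fun t => p (i + t)) (Iio n) := fun _ hs _ ht h =>
  (((hp.eq_iff_modEq hinj hn).1 h).add_left_cancel' i).eq_of_lt_of_lt hs ht

theorem Function.Periodic.image_add_Iio (hp : Periodic p n) (hinj : InjOn p (Iio n)) (hn : 0 < n)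
    (i : ℕ) : (fun t => p (i + t)) '' Iio n = p '' Iio n := by
  refine eq_of_subset_of_ncard_le ?_ ?_ ((finite_Iio n).image p)
  · rintro _ ⟨t, -, rfl⟩
    exact ⟨(i + t) % n, Nat.mod_lt _ hn, hp.map_mod_nat _⟩
  · rw [(hp.injOn_add hinj hn i).ncard_image]
    exact ncard_image_le (finite_Iio n)

theorem Function.Periodic.image_mod_eq_nestedMatching (hp : Periodic p n) (i : ℕ) :
    (fun j => s(p ((i + j) % n), p ((n + i - j - 1) % n))) '' Iio (n / 2) =
      nestedMatching (fun t => p (i + t)) n := by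
  refine image_congr fun j hj => ?_
  rw [mem_Iio] at hj
  rw [hp.map_mod_nat, hp.map_mod_nat, show n + i - j - 1 = i + (n - 1 - j) by omega]

theorem Function.Periodic.disjoint_nestedMatching (hp : Periodic p n) (hinj : InjOn p (Iio n))
    {i₁ i₂ : ℕ} (h₁ : i₁ < n / 2) (h₂ : i₂ < n / 2) (hne : i₁ ≠ i₂) :
    Disjoint (nestedMatching (fun t => p (i₁ + t)) n) (nestedMatching (fun t => p (i₂ + t)) n) := by
  have hn : 0 < n := by omega
  have hmod {a b : ℕ} := hp.eq_iff_modEq hinj hn (a := a) (b := b)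
  have sum_modEq {a b c d : ℕ} (h : s(p a, p b) = s(p c, p d)) : a + b ≡ c + d [MOD n] := by
    rcases Sym2.eq_iff.1 h with ⟨hac, hbd⟩ | ⟨had, hbc⟩
    · exact (hmod.1 hac).add (hmod.1 hbd)
    · rw [add_comm c]
      exact (hmod.1 had).add (hmod.1 hbc)
  rw [disjoint_left]
  rintro _ ⟨j₁, hj₁, rfl⟩ ⟨j₂, hj₂, he⟩
  rw [mem_Iio] at hj₁ hj₂
  have hsum := sum_modEq he
  rw [show i₂ + j₂ + (i₂ + (n - 1 - j₂)) = (n - 1) + 2 * i₂ by omega,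
    show i₁ + j₁ + (i₁ + (n - 1 - j₁)) = (n - 1) + 2 * i₁ by omega] at hsum
  have := (hsum.add_left_cancel' (n - 1)).eq_of_lt_of_lt (by omega) (by omega)
  omega

end Periodic

theorem convex_packing_construction_general (n : ℕ) (hn : Even n)
    (p : ℕ → Pt)
    (hper : ∀ k, p (k + n) = p k)
    (hinj : ∀ i j, i < n → j < n → p i = p j → i = j)
    (hconv : ConvexPosition (p '' Set.Iio n))
    (hord : ∀ i, IsHullEdge (p '' Set.Iio n) s(p i, p (i + 1))) :
    (∀ i < n / 2,
      IsPlaneMatch (p '' Set.Iio n)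
        ((fun j => s(p ((i + j) % n), p ((n + i - j - 1) % n))) '' Set.Iio (n / 2))) ∧
    (∀ i₁ i₂, i₁ < n / 2 → i₂ < n / 2 → i₁ ≠ i₂ →
      Disjoint
        ((fun j => s(p ((i₁ + j) % n), p ((n + i₁ - j - 1) % n))) '' Set.Iio (n / 2))
        ((fun j => s(p ((i₂ + j) % n), p ((n + i₂ - j - 1) % n))) '' Set.Iio (n / 2))) := by
  have hp : Function.Periodic p n := hper
  have hinj' : InjOn p (Iio n) := fun a ha b hb => hinj a b ha hb
  refine ⟨fun i hi => ?_, fun i₁ i₂ h₁ h₂ hne => ?_⟩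
  · have hn0 : 0 < n := by omega
    have hwindow := hp.image_add_Iio hinj' hn0 i
    have hext := ((finite_Iio n).image p).subset_extremePoints_convexHull hconv
    rw [hp.image_mod_eq_nestedMatching, ← hwindow]
    refine isPlaneMatch_nestedMatching (hp.injOn_add hinj' hn0 i) (hwindow ▸ hext)
      (fun t _ => ?_) hn
    rw [hwindow]
    exact (hord (i + t)).segment_subset_frontier
  · rw [hp.image_mod_eq_nestedMatching, hp.image_mod_eq_nestedMatching]
    exact hp.disjoint_nestedMatching hinj' h₁ h₂ hne

/-- Let `p 0, …, p (n-1)` be `n` points in convex position listed in cyclic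
order (encoded by: consecutive points form hull edges), `n` even, indices taken mod `n`
(`p` is extended `n`-periodically). For `0 ≤ i < n/2` let
`M i = { p ((i+j) % n) p ((n+i-j-1) % n) : 0 ≤ j < n/2 }`
(this is `{ p_{i+j-1} p_{n+i-j} : j = 1, …, n/2 }` reindexed). Then each `M i` is a plane
perfect matching of `P = p '' [0,n)` and the `M i` are pairwise edge-disjoint; hence `n/2`
plane perfect matchings can be packed into the complete geometric graph on `P`. -/
theorem convex_packing_construction (n : ℕ) (hn : Even n) (h4 : 4 ≤ n)
    (p : ℕ → Pt)
    (hper : ∀ k, p (k + n) = p k)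
    (hinj : ∀ i j, i < n → j < n → p i = p j → i = j)
    (hconv : ConvexPosition (p '' Set.Iio n))
    (hord : ∀ i, IsHullEdge (p '' Set.Iio n) s(p i, p (i + 1))) :
    (∀ i < n / 2,
      IsPlaneMatch (p '' Set.Iio n)
        ((fun j => s(p ((i + j) % n), p ((n + i - j - 1) % n))) '' Set.Iio (n / 2))) ∧
    (∀ i₁ i₂, i₁ < n / 2 → i₂ < n / 2 → i₁ ≠ i₂ →
      Disjoint
        ((fun j => s(p ((i₁ + j) % n), p ((n + i₁ - j - 1) % n))) '' Set.Iio (n / 2))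
        ((fun j => s(p ((i₂ + j) % n), p ((n + i₂ - j - 1) % n))) '' Set.Iio (n / 2))) :=
  convex_packing_construction_general n hn p hper hinj hconv hord
end
end

section
/- Let P be a finite set of points in the plane, |P| even, no three collinear, partitioned into color classes. If at most half the points share any single color, then the perfect matching of P minimizing total Euclidean edge length among matchings whose every edge joins two points of distinct colors is non-crossing. -/
noncomputable section

/-- The Euclidean length of an edge. -/
def edgeLength (e : Sym2 Pt) : ℝ :=
  Sym2.lift ⟨fun a b => dist a b, fun a b => dist_comm a b⟩ e

lemma edgeLength_mk (a b : Pt) : edgeLength s(a, b) = dist a b := rfl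

lemma sym2_cases (g : Sym2 Pt) : ∃ x y, g = s(x, y) := by
  induction g using Sym2.ind with
  | _ x y => exact ⟨x, y, rfl⟩

lemma key_ineq {a b u v p : Pt} (hp1 : p ∈ openSegment ℝ a b)
    (hp2 : p ∈ openSegment ℝ u v) (hncol : ¬ Collinear ℝ ({a, b, u} : Set Pt)) :
    dist a u + dist b v < dist a b + dist u v := by
  have hab : a ≠ b := by
    rintro rfl
    exact hncol (by simpa using collinear_pair ℝ a u)
  have hpa : p ≠ a := by rintro rfl; rw [left_mem_openSegment_iff] at hp1; exact hab hp1
  have h1 : dist a p + dist p b = dist a b := by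
    rw [dist_add_dist_eq_iff]; exact mem_segment_iff_wbtw.mp (openSegment_subset_segment ℝ a b hp1)
  have h2 : dist u p + dist p v = dist u v := by
    rw [dist_add_dist_eq_iff]; exact mem_segment_iff_wbtw.mp (openSegment_subset_segment ℝ u v hp2)
  have t2 : dist b v ≤ dist b p + dist p v := dist_triangle b p v
  have t1' : dist a u < dist a p + dist p u := by
    rcases lt_or_eq_of_le (dist_triangle a p u) with h | h
    · exact h
    · exfalso
      have hw1 : Wbtw ℝ a p u := dist_add_dist_eq_iff.mp h.symm
      have hw2 : Wbtw ℝ a p b := mem_segment_iff_wbtw.mp (openSegment_subset_segment ℝ a b hp1)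
      have hu : u ∈ line[ℝ, a, p] :=
        hw1.collinear.mem_affineSpan_of_mem_of_ne (by simp) (by simp) (by simp) hpa.symm
      have hb : b ∈ line[ℝ, a, p] :=
        hw2.collinear.mem_affineSpan_of_mem_of_ne (by simp) (by simp) (by simp) hpa.symm
      have : Collinear ℝ ({u, b, a, p} : Set Pt) :=
        collinear_insert_insert_of_mem_affineSpan_pair hu hb
      exact hncol (this.subset (by intro x hx; simp at hx ⊢; tauto))
  have : dist a u + dist b v < (dist a p + dist p u) + (dist b p + dist p v) := by linarith
  calc dist a u + dist b v < (dist a p + dist p u) + (dist b p + dist p v) := this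
    _ = (dist a p + dist p b) + (dist u p + dist p v) := by
        rw [dist_comm p u, dist_comm b p]; ring
    _ = dist a b + dist u v := by rw [h1, h2]

lemma no_shorter {C : Type} {P : Set Pt} (hfin : P.Finite) {c : Pt → C}
    {M : Set (Sym2 Pt)} (hM : IsPerfMatch P M)
    (hmin : ∀ M' : Set (Sym2 Pt),
      IsPerfMatch P M' → (∀ e ∈ M', ∀ a b : Pt, e = s(a, b) → c a ≠ c b) →
      ∑ᶠ e ∈ M, edgeLength e ≤ ∑ᶠ e ∈ M', edgeLength e)
    (hMcol : ∀ e ∈ M, ∀ a b : Pt, e = s(a, b) → c a ≠ c b)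
    {e f : Sym2 Pt} {a b u v : Pt} (he : e ∈ M) (hf : f ∈ M) (hef : e ≠ f)
    (hea : e = s(a, b)) (hfu : f = s(u, v))
    (hcau : c a ≠ c u) (hcbv : c b ≠ c v)
    (hlen : dist a u + dist b v < dist a b + dist u v) : False := by
  classical
  have hae : a ∈ e := by rw [hea]; simp
  have hbe : b ∈ e := by rw [hea]; simp
  have huf : u ∈ f := by rw [hfu]; simp
  have hvf : v ∈ f := by rw [hfu]; simp
  have haP : a ∈ P := (hM.1 e he).2 a hae
  have hbP : b ∈ P := (hM.1 e he).2 b hbe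
  have huP : u ∈ P := (hM.1 f hf).2 u huf
  have hvP : v ∈ P := (hM.1 f hf).2 v hvf
  have hab : a ≠ b := by
    have := (hM.1 e he).1; rw [hea] at this; simpa [Sym2.mk_isDiag_iff] using this
  have huv : u ≠ v := by
    have := (hM.1 f hf).1; rw [hfu] at this; simpa [Sym2.mk_isDiag_iff] using this
  have hdisj : ∀ x, x ∈ e → x ∈ f → False := fun x hxe hxf =>
    hef ((hM.2 x ((hM.1 e he).2 x hxe)).unique ⟨he, hxe⟩ ⟨hf, hxf⟩)
  have hau : a ≠ u := fun h => hdisj a hae (by rw [h]; exact huf)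
  have hav : a ≠ v := fun h => hdisj a hae (by rw [h]; exact hvf)
  have hbu : b ≠ u := fun h => hdisj b hbe (by rw [h]; exact huf)
  have hbv : b ≠ v := fun h => hdisj b hbe (by rw [h]; exact hvf)
  set g1 : Sym2 Pt := s(a, u) with hg1
  set g2 : Sym2 Pt := s(b, v) with hg2
  set M' : Set (Sym2 Pt) := (M \ {e, f}) ∪ {g1, g2} with hM'def
  have hg1g2 : g1 ≠ g2 := by
    intro h; rw [hg1, hg2, Sym2.eq_iff] at h
    rcases h with ⟨h1, -⟩ | ⟨h1, -⟩
    exacts [hab h1, hav h1]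
  have hg1M : g1 ∉ M := by
    intro hg
    have h1 : g1 = e := (hM.2 a haP).unique ⟨hg, by rw [hg1]; simp⟩ ⟨he, hae⟩
    rw [hg1, hea, Sym2.eq_iff] at h1
    rcases h1 with ⟨-, h⟩ | ⟨h, -⟩
    · exact hbu h.symm
    · exact hab h
  have hg2M : g2 ∉ M := by
    intro hg
    have h1 : g2 = e := (hM.2 b hbP).unique ⟨hg, by rw [hg2]; simp⟩ ⟨he, hbe⟩
    rw [hg2, hea, Sym2.eq_iff] at h1
    rcases h1 with ⟨h, -⟩ | ⟨-, h⟩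
    · exact hab h.symm
    · exact hav h.symm
  -- M' is a perfect matching
  have hM' : IsPerfMatch P M' := by
    constructor
    · rintro g (⟨hgM, -⟩ | hg)
      · exact hM.1 g hgM
      · rcases hg with rfl | rfl
        · refine ⟨by rw [hg1]; simp [Sym2.mk_isDiag_iff, hau], ?_⟩
          intro x hx; rw [hg1, Sym2.mem_iff] at hx
          rcases hx with rfl | rfl
          exacts [haP, huP]
        · refine ⟨by rw [hg2]; simp [Sym2.mk_isDiag_iff, hbv], ?_⟩
          intro x hx; rw [hg2, Sym2.mem_iff] at hx
          rcases hx with rfl | rfl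
          exacts [hbP, hvP]
    · intro x hx
      obtain ⟨gx, ⟨hgxM, hxgx⟩, hgxuniq⟩ := hM.2 x hx
      by_cases hxa : x = a ∨ x = u
      · refine ⟨g1, ⟨Or.inr (Or.inl rfl), by rw [hg1, Sym2.mem_iff]; tauto⟩, ?_⟩
        rintro g' ⟨(⟨hg'M, hg'ne⟩ | hg'), hxg'⟩
        · exfalso
          rcases hxa with rfl | rfl
          · exact hg'ne (Or.inl ((hM.2 x haP).unique ⟨hg'M, hxg'⟩ ⟨he, hae⟩))
          · exact hg'ne (Or.inr ((hM.2 x huP).unique ⟨hg'M, hxg'⟩ ⟨hf, huf⟩))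
        · rcases hg' with rfl | rfl
          · rfl
          · exfalso
            rw [hg2, Sym2.mem_iff] at hxg'
            rcases hxa with rfl | rfl <;> rcases hxg' with h | h
            exacts [hab h, hav h, hbu h.symm, huv h]
      · by_cases hxb : x = b ∨ x = v
        · refine ⟨g2, ⟨Or.inr (Or.inr rfl), by rw [hg2, Sym2.mem_iff]; tauto⟩, ?_⟩
          rintro g' ⟨(⟨hg'M, hg'ne⟩ | hg'), hxg'⟩
          · exfalso
            rcases hxb with rfl | rfl
            · exact hg'ne (Or.inl ((hM.2 x hbP).unique ⟨hg'M, hxg'⟩ ⟨he, hbe⟩))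
            · exact hg'ne (Or.inr ((hM.2 x hvP).unique ⟨hg'M, hxg'⟩ ⟨hf, hvf⟩))
          · rcases hg' with rfl | rfl
            · exfalso
              rw [hg1, Sym2.mem_iff] at hxg'
              rcases hxb with rfl | rfl <;> rcases hxg' with h | h
              exacts [hab h.symm, hbu h, hav h.symm, huv h.symm]
            · rfl
        · push_neg at hxa hxb
          have hgxe : gx ≠ e := by
            intro h; rw [h, hea, Sym2.mem_iff] at hxgx
            rcases hxgx with h' | h'
            exacts [hxa.1 h', hxb.1 h']
          have hgxf : gx ≠ f := by
            intro h; rw [h, hfu, Sym2.mem_iff] at hxgx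
            rcases hxgx with h' | h'
            exacts [hxa.2 h', hxb.2 h']
          refine ⟨gx, ⟨Or.inl ⟨hgxM, by simp [hgxe, hgxf]⟩, hxgx⟩, ?_⟩
          rintro g' ⟨(⟨hg'M, -⟩ | hg'), hxg'⟩
          · exact hgxuniq g' ⟨hg'M, hxg'⟩
          · exfalso
            rcases hg' with rfl | rfl
            · rw [hg1, Sym2.mem_iff] at hxg'
              rcases hxg' with h | h
              exacts [hxa.1 h, hxa.2 h]
            · rw [hg2, Sym2.mem_iff] at hxg'
              rcases hxg' with h | h
              exacts [hxb.1 h, hxb.2 h]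
  -- colors
  have hM'col : ∀ g ∈ M', ∀ x y : Pt, g = s(x, y) → c x ≠ c y := by
    rintro g (⟨hgM, -⟩ | hg) x y hgxy
    · exact hMcol g hgM x y hgxy
    · rcases hg with rfl | rfl
      · rw [hg1, Sym2.eq_iff] at hgxy
        rcases hgxy with ⟨rfl, rfl⟩ | ⟨rfl, rfl⟩
        exacts [hcau, hcau.symm]
      · rw [hg2, Sym2.eq_iff] at hgxy
        rcases hgxy with ⟨rfl, rfl⟩ | ⟨rfl, rfl⟩
        exacts [hcbv, hcbv.symm]
  -- finiteness
  have hMfin : M.Finite := by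
    apply (Set.Finite.image2 (fun x y => s(x, y)) hfin hfin).subset
    intro g hg
    obtain ⟨x, y, rfl⟩ := sym2_cases g
    exact Set.mem_image2_of_mem ((hM.1 _ hg).2 x (by simp)) ((hM.1 _ hg).2 y (by simp))
  have hes : e ∈ hMfin.toFinset := hMfin.mem_toFinset.mpr he
  have hfs : f ∈ hMfin.toFinset := hMfin.mem_toFinset.mpr hf
  have hM'eq : M' = ↑((hMfin.toFinset \ {e, f}) ∪ ({g1, g2} : Finset (Sym2 Pt))) := by
    ext g
    simp only [hM'def, Set.mem_union, Set.mem_diff, Set.mem_insert_iff,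
      Set.mem_singleton_iff, Finset.coe_union, Finset.coe_sdiff,
      Finset.coe_insert, Finset.coe_singleton, Set.Finite.coe_toFinset]
  -- sum comparison
  have hsum : ∑ᶠ g ∈ M', edgeLength g < ∑ᶠ g ∈ M, edgeLength g := by
    have hMrw : ∑ᶠ g ∈ M, edgeLength g = ∑ g ∈ hMfin.toFinset, edgeLength g := by
      rw [← finsum_mem_coe_finset, hMfin.coe_toFinset]
    rw [hM'eq, finsum_mem_coe_finset, hMrw]
    have hd : Disjoint (hMfin.toFinset \ ({e, f} : Finset _)) ({g1, g2} : Finset (Sym2 Pt)) := by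
      rw [Finset.disjoint_right]
      intro g hg hg'
      rw [Finset.mem_insert, Finset.mem_singleton] at hg
      rw [Finset.mem_sdiff, hMfin.mem_toFinset] at hg'
      rcases hg with rfl | rfl
      exacts [hg1M hg'.1, hg2M hg'.1]
    rw [Finset.sum_union hd]
    have h1 : ∑ g ∈ ({g1, g2} : Finset (Sym2 Pt)), edgeLength g = dist a u + dist b v := by
      rw [Finset.sum_pair hg1g2, hg1, hg2, edgeLength_mk, edgeLength_mk]
    have h2 : ∑ g ∈ hMfin.toFinset \ {e, f}, edgeLength g
        = ∑ g ∈ hMfin.toFinset, edgeLength g - (dist a b + dist u v) := by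
      rw [Finset.sum_sdiff_eq_sub (Finset.insert_subset hes (Finset.singleton_subset_iff.mpr hfs))]
      rw [Finset.sum_pair hef, hea, hfu, edgeLength_mk, edgeLength_mk]
    rw [h1, h2]; linarith
  have := hmin M' hM' hM'col
  linarith


/-- Let `P` be a finite set of points in the plane, `|P|` even, no three
collinear, colored so that at most half the points share any single color. Then a perfect
matching of `P` whose edges join points of distinct colors and which minimizes the total
Euclidean edge length among all such matchings is non-crossing. -/
theorem min_length_colored_matching_noncrossing {C : Type} (P : Set Pt)
    (hfin : P.Finite) (heven : Even P.ncard) (hcol : NoThreeCollinear P)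
    (c : Pt → C)
    (hhalf : ∀ col : C, 2 * {x ∈ P | c x = col}.ncard ≤ P.ncard)
    (M : Set (Sym2 Pt))
    (hM : IsPerfMatch P M)
    (hMcol : ∀ e ∈ M, ∀ a b : Pt, e = s(a, b) → c a ≠ c b)
    (hmin : ∀ M' : Set (Sym2 Pt),
      IsPerfMatch P M' → (∀ e ∈ M', ∀ a b : Pt, e = s(a, b) → c a ≠ c b) →
      ∑ᶠ e ∈ M, edgeLength e ≤ ∑ᶠ e ∈ M', edgeLength e) :
    M.Pairwise fun e f => ¬ EdgesCross e f := by
  intro e he f hf hef hcross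
  obtain ⟨a, b, u, v, hea, hfu, p, hp1, hp2⟩ := hcross
  have hae : a ∈ e := by rw [hea]; simp
  have hbe : b ∈ e := by rw [hea]; simp
  have huf : u ∈ f := by rw [hfu]; simp
  have hvf : v ∈ f := by rw [hfu]; simp
  have haP : a ∈ P := (hM.1 e he).2 a hae
  have hbP : b ∈ P := (hM.1 e he).2 b hbe
  have huP : u ∈ P := (hM.1 f hf).2 u huf
  have hvP : v ∈ P := (hM.1 f hf).2 v hvf
  have hab : a ≠ b := by
    have := (hM.1 e he).1; rw [hea] at this; simpa [Sym2.mk_isDiag_iff] using this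
  have huv : u ≠ v := by
    have := (hM.1 f hf).1; rw [hfu] at this; simpa [Sym2.mk_isDiag_iff] using this
  have hdisj : ∀ x, x ∈ e → x ∈ f → False := fun x hxe hxf =>
    hef ((hM.2 x ((hM.1 e he).2 x hxe)).unique ⟨he, hxe⟩ ⟨hf, hxf⟩)
  have hau : a ≠ u := fun h => hdisj a hae (by rw [h]; exact huf)
  have hav : a ≠ v := fun h => hdisj a hae (by rw [h]; exact hvf)
  have hbu : b ≠ u := fun h => hdisj b hbe (by rw [h]; exact huf)
  have hbv : b ≠ v := fun h => hdisj b hbe (by rw [h]; exact hvf)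
  have hnc1 : ¬ Collinear ℝ ({a, b, u} : Set Pt) := hcol a haP b hbP u huP hab hau hbu
  have hnc2 : ¬ Collinear ℝ ({a, b, v} : Set Pt) := hcol a haP b hbP v hvP hab hav hbv
  have ineq1 : dist a u + dist b v < dist a b + dist u v := key_ineq hp1 hp2 hnc1
  have ineq2 : dist a v + dist b u < dist a b + dist u v := by
    have hp2' : p ∈ openSegment ℝ v u := by rwa [openSegment_symm]
    have := key_ineq hp1 hp2' hnc2
    rwa [dist_comm v u] at this
  have hcab : c a ≠ c b := hMcol e he a b hea
  have hcuv : c u ≠ c v := hMcol f hf u v hfu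
  by_cases h : c a = c u ∨ c b = c v
  · -- use pairing (a, v), (b, u)
    have hfu' : f = s(v, u) := by rw [hfu, Sym2.eq_swap]
    have hcav : c a ≠ c v := by
      rcases h with h | h
      · rw [h]; exact hcuv
      · rw [← h]; exact hcab
    have hcbu : c b ≠ c u := by
      rcases h with h | h
      · rw [← h]; exact fun h' => hcab h'.symm
      · rw [h]; exact fun h' => hcuv h'.symm
    exact no_shorter hfin hM hmin hMcol he hf hef hea hfu' hcav hcbu
      (by rwa [dist_comm v u])
  · push_neg at h
    exact no_shorter hfin hM hmin hMcol he hf hef hea hfu h.1 h.2 ineq1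
end
end
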